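/- arXiv:1901.04204 — 5 statements merged into one kernel-verified Lean document; each statement's English description precedes it below -/
import Mathlib

section
/- Let G be a group acting by simplicial automorphisms on a simplicial complex X with a single facet C as fundamental domain. Then for every k-dimensional face σ of C, the stabilizer Stab_G(σ) equals the intersection of the stabilizers Stab_G(v) over all vertices v of σ. -/
open scoped ContinuousMap Pointwise

set_option maxHeartbeats 1000000
set_option synthInstance.maxHeartbeats 1000000

universe u v

/-- An abstract simplicial complex on a vertex type `V`. -/
structure AbsSimplicialComplex (V : Type u) where
  faces : Set (Finset V)
  nonempty_of_mem : ∀ {s : Finset V}, s ∈ faces → s.Nonempty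
  down_closed : ∀ {s t : Finset V}, s ∈ faces → t ⊆ s → t.Nonempty → t ∈ faces

namespace AbsSimplicialComplex

variable {V : Type u}

/-- The vertices of an abstract simplicial complex. -/
def vertices (X : AbsSimplicialComplex V) : Set V := {v | {v} ∈ X.faces}

/-- `X` has dimension `d`. -/
def Dim (X : AbsSimplicialComplex V) (d : ℕ) : Prop :=
  (∀ s ∈ X.faces, s.card ≤ d + 1) ∧ ∃ s ∈ X.faces, s.card = d + 1

/-- A facet is a maximal simplex. -/
def IsFacet (X : AbsSimplicialComplex V) (s : Finset V) : Prop :=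
  s ∈ X.faces ∧ ∀ t ∈ X.faces, s ⊆ t → t = s

/-- A complex is pure of dimension `d` if all its facets have dimension `d`. -/
def IsPure (X : AbsSimplicialComplex V) (d : ℕ) : Prop :=
  (∀ s ∈ X.faces, s.card ≤ d + 1) ∧ ∀ s, X.IsFacet s → s.card = d + 1

/-- The link of a simplex `σ`. -/
def link [DecidableEq V] (X : AbsSimplicialComplex V) (σ : Finset V) :
    AbsSimplicialComplex V where
  faces := {t | Disjoint t σ ∧ t ∪ σ ∈ X.faces ∧ t.Nonempty}
  nonempty_of_mem h := h.2.2
  down_closed := by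
    rintro s t ⟨hd, hu, -⟩ hts htne
    refine ⟨Finset.disjoint_of_subset_left hts hd, ?_, htne⟩
    exact X.down_closed hu (Finset.union_subset_union_left hts)
      ⟨htne.choose, Finset.mem_union_left _ htne.choose_spec⟩

/-- The geometric realisation of an abstract simplicial complex, as the set of
convex-combination functions supported on a face. -/
abbrev geomReal (X : AbsSimplicialComplex V) : Type u :=
  {f : V → ℝ // ∃ s ∈ X.faces, (∀ v ∉ s, f v = 0) ∧ (∀ v, 0 ≤ f v) ∧ ∑ v ∈ s, f v = 1}

/-- The support of a point of the geometric realisation. -/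
def ptSupport {X : AbsSimplicialComplex V} (p : geomReal X) : Set V := {v | p.1 v ≠ 0}

/-- The complement `|X| \ |X^{(s)}|` of the `s`-skeleton in the geometric realisation:
the points whose open simplex has dimension `> s`. -/
abbrev complementSkeleton (X : AbsSimplicialComplex V) (s : ℤ) : Type u :=
  {p : geomReal X // s + 2 ≤ (Set.ncard (ptSupport p) : ℤ)}

/-- The barycentric subdivision: simplices are chains of faces of `X`. -/
def barySubdiv (X : AbsSimplicialComplex V) : AbsSimplicialComplex (Finset V) where
  faces := {c | c.Nonempty ∧ (∀ s ∈ c, s ∈ X.faces) ∧ IsChain (· ⊆ ·) (c : Set (Finset V))}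
  nonempty_of_mem h := h.1
  down_closed := by
    rintro c d ⟨-, hmem, hchain⟩ hdc hdne
    exact ⟨hdne, fun s hs => hmem s (hdc hs), IsChain.mono (Finset.coe_subset.mpr hdc) hchain⟩

/-- Two facets are adjacent if they intersect in a codimension-one face. -/
def Adjacent [DecidableEq V] (X : AbsSimplicialComplex V) (s t : Finset V) : Prop :=
  X.IsFacet s ∧ X.IsFacet t ∧ s ≠ t ∧ (s ∩ t).card + 1 = s.card

/-- A chamber complex: any two facets are connected by a gallery. -/
def IsChamberComplex [DecidableEq V] (X : AbsSimplicialComplex V) : Prop :=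
  ∀ s t, X.IsFacet s → X.IsFacet t → Relation.ReflTransGen X.Adjacent s t

/-- The chamber graph of a complex, as a 1-dimensional simplicial complex. -/
def chamberGraph [DecidableEq V] (X : AbsSimplicialComplex V) :
    AbsSimplicialComplex (Finset V) where
  faces := {p | p.Nonempty ∧ p.card ≤ 2 ∧ (∀ F ∈ p, X.IsFacet F) ∧
      ∀ F ∈ p, ∀ F' ∈ p, F = F' ∨ X.Adjacent F F'}
  nonempty_of_mem h := h.1
  down_closed := by
    rintro p q ⟨-, hcard, hfac, hadj⟩ hqp hqne
    exact ⟨hqne, le_trans (Finset.card_le_card hqp) hcard,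
      fun F hF => hfac F (hqp hF), fun F hF F' hF' => hadj F (hqp hF) F' (hqp hF')⟩

end AbsSimplicialComplex

open AbsSimplicialComplex

/-- `n`-connectedness of a topological space (`n = -1` meaning nonempty). -/
def IsNConnectedSpace (X : Type*) [TopologicalSpace X] (n : ℤ) : Prop :=
  (-1 ≤ n → Nonempty X) ∧
    ∀ k : ℕ, (k : ℤ) ≤ n → ∀ x : X, Subsingleton (HomotopyGroup (Fin k) X x)

/-- The basepoint of the `n`-sphere. -/
noncomputable def spherePoint (n : ℕ) :
    Metric.sphere (0 : EuclideanSpace ℝ (Fin (n + 1))) 1 :=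
  ⟨EuclideanSpace.single 0 1, by simp⟩

/-- The wedge of a family of `n`-spheres indexed by `ι` (a point if `ι` is empty). -/
def WedgeOfSpheres (ι : Type) (n : ℕ) : Type :=
  Quotient (Relation.EqvGen.setoid
    (fun (a b : (Σ _ : ι, Metric.sphere (0 : EuclideanSpace ℝ (Fin (n + 1))) 1) ⊕ Unit) =>
      ∃ i, a = Sum.inl ⟨i, spherePoint n⟩ ∧ b = Sum.inr ()))

noncomputable instance (ι : Type) (n : ℕ) : TopologicalSpace (WedgeOfSpheres ι n) :=
  inferInstanceAs (TopologicalSpace (Quotient _))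

/-- A space is `m`-spherical if it is homotopy equivalent to a wedge of `m`-spheres. -/
def IsSpherical (m : ℕ) (X : Type*) [TopologicalSpace X] : Prop :=
  ∃ ι : Type, Nonempty (X ≃ₕ WedgeOfSpheres ι m)

namespace AbsSimplicialComplex

variable {V : Type u}

/-- Ordered simplices: tuples of vertices spanning a face. -/
def OrderedSimplex [DecidableEq V] (X : AbsSimplicialComplex V) (n : ℕ) : Type u :=
  {σ : Fin (n + 1) → V // Finset.image σ Finset.univ ∈ X.faces}

/-- The simplicial `n`-chains with coefficients in `R`. -/
abbrev Chains (R : Type v) [CommRing R] [DecidableEq V] (X : AbsSimplicialComplex V)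
    (n : ℕ) : Type (max u v) := OrderedSimplex X n →₀ R

/-- The `i`-th face of an ordered simplex. -/
def faceMap [DecidableEq V] {X : AbsSimplicialComplex V} {n : ℕ}
    (σ : OrderedSimplex X (n + 1)) (i : Fin (n + 2)) : OrderedSimplex X n :=
  ⟨σ.1 ∘ i.succAbove, by
    refine X.down_closed σ.2 ?_ (Finset.univ_nonempty.image _)
    intro v hv
    simp only [Finset.mem_image, Function.comp_apply] at hv ⊢
    obtain ⟨j, -, rfl⟩ := hv
    exact ⟨i.succAbove j, Finset.mem_univ _, rfl⟩⟩

/-- The simplicial boundary map. -/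
noncomputable def boundary (R : Type*) [CommRing R] [DecidableEq V]
    (X : AbsSimplicialComplex V) (n : ℕ) : Chains R X (n + 1) →ₗ[R] Chains R X n :=
  Finsupp.lsum R fun σ => LinearMap.toSpanSingleton R _
    (∑ i : Fin (n + 2), ((-1 : R) ^ (i : ℕ)) • Finsupp.single (faceMap σ i) (1 : R))

/-- The augmentation map. -/
noncomputable def augmentation (R : Type*) [CommRing R] [DecidableEq V]
    (X : AbsSimplicialComplex V) : Chains R X 0 →ₗ[R] R :=
  Finsupp.lsum R fun _ => LinearMap.id

/-- Quotient `ker f / (im g ∩ ker f)`, used to define homology. -/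
noncomputable def homologyOf {R M N P : Type*} [CommRing R] [AddCommGroup M]
    [AddCommGroup N] [AddCommGroup P] [Module R M] [Module R N] [Module R P]
    (f : M →ₗ[R] P) (g : N →ₗ[R] M) : Type _ :=
  LinearMap.ker f ⧸ Submodule.comap (LinearMap.ker f).subtype (LinearMap.range g)

/-- Reduced simplicial homology of `X` with coefficients in `R`. -/
noncomputable def reducedHomology (R : Type v) [CommRing R] [DecidableEq V]
    (X : AbsSimplicialComplex V) : ℕ → Type _
  | 0 => homologyOf (augmentation R X) (boundary R X 0)
  | (n + 1) => homologyOf (boundary R X n) (boundary R X (n + 1))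

/-- `X` is `m`-acyclic over `R`: reduced homology vanishes in degrees `≤ m`
(and `X` is nonempty if `m ≥ -1`). -/
def IsAcyclicTo (R : Type*) [CommRing R] [DecidableEq V] (X : AbsSimplicialComplex V)
    (m : ℤ) : Prop :=
  (-1 ≤ m → X.faces.Nonempty) ∧
    ∀ i : ℕ, (i : ℤ) ≤ m → Subsingleton (reducedHomology R X i)

/-- `X` is Cohen–Macaulay over `R`. -/
def IsCM (R : Type*) [CommRing R] [DecidableEq V] (X : AbsSimplicialComplex V)
    (d : ℕ) : Prop :=
  X.Dim d ∧ IsAcyclicTo R X ((d : ℤ) - 1) ∧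
    ∀ σ ∈ X.faces, IsAcyclicTo R (X.link σ) ((d : ℤ) - σ.card - 1)

/-- `X` is homotopy Cohen–Macaulay. -/
def IsHCM [DecidableEq V] (X : AbsSimplicialComplex V) (d : ℕ) : Prop :=
  X.Dim d ∧ IsNConnectedSpace (geomReal X) ((d : ℤ) - 1) ∧
    ∀ σ ∈ X.faces, IsNConnectedSpace (geomReal (X.link σ)) ((d : ℤ) - σ.card - 1)

end AbsSimplicialComplex

/-- The coset complex `CC(G, H)`: the nerve of the covering of `G` by the
left cosets of the subgroups in the family `H`. -/
def cosetComplex (G : Type*) [Group G] (H : Set (Subgroup G)) :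
    AbsSimplicialComplex (Set G) where
  faces := {s | s.Nonempty ∧ (∀ A ∈ s, ∃ g : G, ∃ K ∈ H, A = g • (K : Set G)) ∧
      (⋂ A ∈ s, (A : Set G)).Nonempty}
  nonempty_of_mem h := h.1
  down_closed := by
    rintro s t ⟨-, hco, ⟨x, hx⟩⟩ hts htne
    refine ⟨htne, fun A hA => hco A (hts hA), ⟨x, ?_⟩⟩
    simp only [Set.mem_iInter] at hx ⊢
    exact fun A hA => hx A (hts hA)


/-- if `C` is a facet which is a fundamental domain, then the setwise
stabiliser of any face `σ` of `C` is the intersection of the stabilisers of the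
vertices of `σ`. -/
theorem statement3 (G V : Type*) [Group G] [MulAction G V] [DecidableEq V]
    (X : AbsSimplicialComplex V)
    (hact : ∀ (g : G) (s : Finset V), s ∈ X.faces ↔ g • s ∈ X.faces)
    (C : Finset V) (hC : X.IsFacet C)
    (hfd : ∀ σ ∈ X.faces, ∃! τ : Finset V, τ ⊆ C ∧ ∃ g : G, g • σ = τ)
    (σ : Finset V) (hσC : σ ⊆ C) (hσ : σ ∈ X.faces) :
    MulAction.stabilizer G σ = ⨅ v ∈ σ, MulAction.stabilizer G v := by
  ext g
  simp only [Subgroup.mem_iInf, MulAction.mem_stabilizer_iff]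
  constructor
  · intro hg v hv
    by_contra hne
    set w := g • v with hw
    have hwσ : w ∈ σ := by
      rw [← hg]; exact Finset.smul_mem_smul_finset hv
    have hwv : w ≠ v := hne
    have h1 : σ \ {v} ∈ X.faces :=
      X.down_closed hσ Finset.sdiff_subset ⟨w, Finset.mem_sdiff.mpr ⟨hwσ, by simp [hwv]⟩⟩
    have hsmul : g • (σ \ {v}) = σ \ {w} := by
      rw [Finset.smul_finset_sdiff, Finset.smul_finset_singleton, hg, ← hw]
    obtain ⟨τ, -, huniq⟩ := hfd (σ \ {v}) h1
    have e1 : σ \ {v} = τ :=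
      huniq (σ \ {v}) ⟨Finset.sdiff_subset.trans hσC, 1, one_smul _ _⟩
    have e2 : σ \ {w} = τ :=
      huniq (σ \ {w}) ⟨Finset.sdiff_subset.trans hσC, g, hsmul⟩
    have : v ∈ σ \ {v} := by
      rw [e1, ← e2]; exact Finset.mem_sdiff.mpr ⟨hv, by simp [Ne.symm hwv]⟩
    simp at this
  · intro h
    ext x
    simp only [Finset.mem_smul_finset]
    constructor
    · rintro ⟨y, hy, rfl⟩; rw [h y hy]; exact hy
    · intro hx; exact ⟨x, hx, h x hx⟩
end

section
/- Every Cohen–Macaulay simplicial complex (over any field or ℤ) is pure and is a chamber complex (i.e., strongly connected). -/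
open scoped ContinuousMap Pointwise

set_option maxHeartbeats 1000000
set_option synthInstance.maxHeartbeats 1000000

universe u v

open AbsSimplicialComplex

/-!
Purity: a facet `F` with `|F| ≤ d` has empty link, whereas the link of `F` is
`(d - |F| - 1)`-acyclic and hence nonempty.

Strong connectivity, by induction on `d`. The link of a vertex `v` is Cohen–Macaulay of
dimension `d - 1`, hence a chamber complex, and its galleries lift to galleries of `X` by
adding `v` back; so facets sharing a vertex are joined by a gallery. For `d ≥ 1`,
`H̃₀(X) = 0` makes the 1-skeleton connected, and along an edge path consecutive vertices
lie in a common facet.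
-/

namespace AbsSimplicialComplex

open Finset Relation

variable {V : Type u}

@[ext]
lemma ext {X Y : AbsSimplicialComplex V} (h : X.faces = Y.faces) : X = Y := by
  cases X; cases Y; simpa using h

lemma exists_isFacet_superset {X : AbsSimplicialComplex V} {n : ℕ}
    (hb : ∀ s ∈ X.faces, s.card ≤ n) {σ : Finset V} (hσ : σ ∈ X.faces) :
    ∃ F, X.IsFacet F ∧ σ ⊆ F := by
  obtain ⟨F, ⟨hF, hσF⟩, hmin⟩ := (measure fun t : Finset V => n - t.card).wf.has_min
    {t | t ∈ X.faces ∧ σ ⊆ t} (show ∃ t, t ∈ X.faces ∧ σ ⊆ t from ⟨σ, hσ, subset_rfl⟩)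
  refine ⟨F, ⟨hF, fun t ht hFt => ?_⟩, hσF⟩
  by_contra hne
  have hlt : F.card < t.card := card_lt_card (ssubset_of_subset_of_ne hFt (Ne.symm hne))
  exact hmin t ⟨ht, hσF.trans hFt⟩ (by have := hb t ht; show n - t.card < n - F.card; omega)

lemma IsFacet.nonempty {X : AbsSimplicialComplex V} {F : Finset V} (hF : X.IsFacet F) :
    F.Nonempty :=
  X.nonempty_of_mem hF.1

lemma singleton_mem_faces {X : AbsSimplicialComplex V} {s : Finset V} (hs : s ∈ X.faces)
    {v : V} (hv : v ∈ s) : {v} ∈ X.faces :=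
  X.down_closed hs (singleton_subset_iff.mpr hv) (singleton_nonempty v)

lemma le_range_of_subsingleton_homologyOf {R M N P : Type*} [CommRing R] [AddCommGroup M]
    [AddCommGroup N] [AddCommGroup P] [Module R M] [Module R N] [Module R P]
    {f : M →ₗ[R] P} {g : N →ₗ[R] M} (h : Subsingleton (homologyOf f g)) :
    LinearMap.ker f ≤ LinearMap.range g := by
  intro c hc
  unfold homologyOf at h
  have := Subsingleton.elim (Submodule.Quotient.mk ⟨c, hc⟩ :
    LinearMap.ker f ⧸ Submodule.comap (LinearMap.ker f).subtype (LinearMap.range g)) 0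
  rw [Submodule.Quotient.mk_eq_zero, Submodule.mem_comap] at this
  simpa using this

variable [DecidableEq V]

lemma IsCM.isPure {R : Type*} [CommRing R] {X : AbsSimplicialComplex V}
    {d : ℕ} (hCM : X.IsCM R d) : X.IsPure d := by
  obtain ⟨⟨hb, -⟩, -, hlink⟩ := hCM
  refine ⟨hb, fun F hF => ?_⟩
  by_contra hne
  obtain ⟨t, hdisj, hu, v, hv⟩ :=
    (hlink F hF.1).1 (by have := hb F hF.1; omega)
  have hvF : v ∈ F := hF.2 _ hu subset_union_right ▸ mem_union_left F hv
  exact disjoint_left.mp hdisj hv hvF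

lemma isChamberComplex_of_isPure_zero {X : AbsSimplicialComplex V}
    (hX : X.IsPure 0) : X.IsChamberComplex := by
  intro F G hF hG
  obtain ⟨a, rfl⟩ := card_eq_one.mp (hX.2 F hF)
  obtain ⟨b, rfl⟩ := card_eq_one.mp (hX.2 G hG)
  by_cases hab : a = b
  · rw [hab]
  · refine .single ⟨hF, hG, by simpa using hab, ?_⟩
    rw [singleton_inter_of_notMem (mem_singleton.not.mpr hab), card_empty, card_singleton]

section Link

variable {X : AbsSimplicialComplex V} {σ : Finset V}

lemma mem_link_faces {t : Finset V} :
    t ∈ (X.link σ).faces ↔ Disjoint t σ ∧ t ∪ σ ∈ X.faces ∧ t.Nonempty :=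
  Iff.rfl

lemma link_link {τ : Finset V} (hτ : Disjoint τ σ) : (X.link σ).link τ = X.link (τ ∪ σ) := by
  ext s
  simp only [mem_link_faces, disjoint_union_left, disjoint_union_right, union_assoc]
  constructor
  · rintro ⟨hsτ, ⟨⟨hsσ, -⟩, hu, -⟩, hs⟩
    exact ⟨⟨hsτ, hsσ⟩, hu, hs⟩
  · rintro ⟨⟨hsτ, hsσ⟩, hu, hs⟩
    exact ⟨hsτ, ⟨⟨hsσ, hτ⟩, hu, hs.mono subset_union_left⟩, hs⟩

lemma IsFacet.link_sdiff {F : Finset V} (hF : X.IsFacet F) (hσF : σ ⊂ F) :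
    (X.link σ).IsFacet (F \ σ) := by
  refine ⟨⟨sdiff_disjoint, by rw [sdiff_union_of_subset hσF.subset]; exact hF.1, sdiff_nonempty.mpr
    (not_subset_of_ssubset hσF)⟩, fun t ⟨htσ, hu, _⟩ hFt => ?_⟩
  have hFu : F ⊆ t ∪ σ := by
    rw [← sdiff_union_of_subset hσF.subset]
    exact union_subset_union_left hFt
  rw [← hF.2 _ hu hFu, union_sdiff_cancel_right htσ]

lemma IsFacet.union_of_link {A : Finset V} (hA : (X.link σ).IsFacet A) :
    X.IsFacet (A ∪ σ) := by
  obtain ⟨⟨hAσ, hu, hA⟩, hmax⟩ := hA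
  refine ⟨hu, fun t ht hAt => ?_⟩
  have hσt : σ ⊆ t := subset_union_right.trans hAt
  have hAt' : A ⊆ t \ σ := subset_sdiff.mpr ⟨subset_union_left.trans hAt, hAσ⟩
  have hlink : t \ σ ∈ (X.link σ).faces :=
    ⟨sdiff_disjoint, by rwa [sdiff_union_of_subset hσt], hA.mono hAt'⟩
  rw [← hmax _ hlink hAt', sdiff_union_of_subset hσt]

lemma Adjacent.union_of_link {A B : Finset V} (h : (X.link σ).Adjacent A B) :
    X.Adjacent (A ∪ σ) (B ∪ σ) := by
  obtain ⟨hA, hB, hne, hcard⟩ := h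
  have hAσ := hA.1.1
  have hBσ := hB.1.1
  refine ⟨hA.union_of_link, hB.union_of_link, fun heq => hne ?_, ?_⟩
  · rw [← union_sdiff_cancel_right hAσ, heq, union_sdiff_cancel_right hBσ]
  · rw [← inter_union_distrib_right, card_union_of_disjoint hAσ,
      card_union_of_disjoint (disjoint_of_subset_left inter_subset_left hAσ), ← hcard]
    omega

lemma IsCM.link {R : Type*} [CommRing R] {d : ℕ} (hCM : X.IsCM R (d + σ.card))
    (hσ : σ ∈ X.faces) : (X.link σ).IsCM R d := by
  have hpure := hCM.isPure
  obtain ⟨⟨hb, -⟩, -, hlink⟩ := hCM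
  refine ⟨⟨fun t ⟨htσ, hu, _⟩ => ?_, ?_⟩, ?_, fun τ ⟨hτσ, hu, _⟩ => ?_⟩
  · have := hb _ hu
    rw [card_union_of_disjoint htσ] at this
    omega
  · obtain ⟨F, hF, hσF⟩ := exists_isFacet_superset hb hσ
    have hcard : (F \ σ).card = d + 1 := by
      rw [card_sdiff_of_subset hσF, hpure.2 F hF]
      omega
    exact ⟨F \ σ, ⟨sdiff_disjoint, by rw [sdiff_union_of_subset hσF]; exact hF.1,
      card_pos.mp (by omega)⟩, hcard⟩
  · convert hlink σ hσ using 1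
    push_cast
    ring
  · rw [link_link hτσ]
    convert hlink _ hu using 1
    rw [card_union_of_disjoint hτσ]
    push_cast
    ring

lemma reflTransGen_adjacent_of_isChamberComplex_link (hlink : (X.link σ).IsChamberComplex)
    {F G : Finset V} (hF : X.IsFacet F) (hG : X.IsFacet G) (hσF : σ ⊂ F) (hσG : σ ⊂ G) :
    ReflTransGen X.Adjacent F G := by
  have : ReflTransGen X.Adjacent (F \ σ ∪ σ) (G \ σ ∪ σ) :=
    (hlink _ _ (hF.link_sdiff hσF) (hG.link_sdiff hσG)).lift (· ∪ σ)
      fun _ _ h => h.union_of_link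
  rwa [sdiff_union_of_subset hσF.subset, sdiff_union_of_subset hσG.subset] at this

end Link

section Skeleton

variable {X : AbsSimplicialComplex V}

def IsEdge (X : AbsSimplicialComplex V) (a b : V) : Prop :=
  ({a, b} : Finset V) ∈ X.faces

instance : Std.Symm X.IsEdge where
  symm a b h := by rwa [IsEdge, pair_comm]

def OrderedSimplex.ofVertex {v : V} (hv : {v} ∈ X.faces) : OrderedSimplex X 0 :=
  ⟨fun _ => v, by rwa [image_const univ_nonempty]⟩

lemma OrderedSimplex.isEdge (τ : OrderedSimplex X 1) : X.IsEdge (τ.1 0) (τ.1 1) := by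
  have himage : image τ.1 univ = {τ.1 0, τ.1 1} := by
    ext a
    simp [Fin.exists_fin_two, eq_comm]
  rw [IsEdge, ← himage]
  exact τ.2

lemma linearCombination_comp_boundary_zero {R : Type*} [CommRing R] {f : V → R}
    (hf : ∀ τ : OrderedSimplex X 1, f (τ.1 0) = f (τ.1 1)) :
    Finsupp.linearCombination R (fun σ : OrderedSimplex X 0 => f (σ.1 0)) ∘ₗ
      boundary R X 0 = 0 := by
  refine Finsupp.lhom_ext fun τ r => ?_
  simp only [Nat.reduceAdd, LinearMap.comp_apply, boundary, Finsupp.lsum_single,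
    LinearMap.toSpanSingleton_apply, map_smul, Fin.sum_univ_two, LinearMap.zero_apply]
  rw [map_add, map_smul, map_smul, Finsupp.linearCombination_single,
    Finsupp.linearCombination_single]
  change r • ((-1 : R) ^ 0 • (1 • f (τ.1 1)) + (-1 : R) ^ 1 • (1 • f (τ.1 0))) = 0
  rw [hf τ]
  simp

lemma reflTransGen_isEdge_of_subsingleton_reducedHomology_zero {R : Type*} [CommRing R]
    [Nontrivial R] (h0 : Subsingleton (reducedHomology R X 0)) {v w : V}
    (hv : {v} ∈ X.faces) (hw : {w} ∈ X.faces) : ReflTransGen X.IsEdge v w := by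
  classical
  let f : V → R := fun a => if ReflTransGen X.IsEdge v a then 1 else 0
  have hf (τ : OrderedSimplex X 1) : f (τ.1 0) = f (τ.1 1) := by
    have hiff : ReflTransGen X.IsEdge v (τ.1 0) ↔ ReflTransGen X.IsEdge v (τ.1 1) :=
      ⟨fun h => h.tail τ.isEdge, fun h => h.tail (Std.Symm.symm _ _ τ.isEdge)⟩
    simp only [f, hiff]
  let c : Chains R X 0 := Finsupp.single (.ofVertex hv) 1 - Finsupp.single (.ofVertex hw) 1
  have hcycle : c ∈ LinearMap.ker (augmentation R X) := by
    rw [LinearMap.mem_ker, map_sub, augmentation, Finsupp.lsum_single, Finsupp.lsum_single,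
      sub_self]
  obtain ⟨b, hb⟩ := le_range_of_subsingleton_homologyOf h0 hcycle
  -- `f` is constant on edge-path components, so it vanishes on the boundary `c = v - w`
  have hfc := LinearMap.congr_fun (linearCombination_comp_boundary_zero hf) b
  rw [LinearMap.comp_apply, hb] at hfc
  rw [map_sub, Finsupp.linearCombination_single, Finsupp.linearCombination_single] at hfc
  change (1 : R) • f v - (1 : R) • f w = 0 at hfc
  by_contra hvw
  simp only [f, if_pos ReflTransGen.refl, if_neg hvw, one_smul, sub_zero, one_ne_zero] at hfc

end Skeleton

lemma isChamberComplex_of_reflTransGen_isEdge {X : AbsSimplicialComplex V} {n : ℕ}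
    (hb : ∀ s ∈ X.faces, s.card ≤ n)
    (hconn : ∀ v w, {v} ∈ X.faces → {w} ∈ X.faces → ReflTransGen X.IsEdge v w)
    (hstar : ∀ v F G, X.IsFacet F → X.IsFacet G → v ∈ F → v ∈ G →
      ReflTransGen X.Adjacent F G) :
    X.IsChamberComplex := by
  intro F G hF hG
  obtain ⟨v, hvF⟩ := hF.nonempty
  obtain ⟨w, hwG⟩ := hG.nonempty
  suffices key : ∀ w, ReflTransGen X.IsEdge v w →
      ∀ G, X.IsFacet G → w ∈ G → ReflTransGen X.Adjacent F G from
    key w (hconn v w (singleton_mem_faces hF.1 hvF) (singleton_mem_faces hG.1 hwG)) G hG hwG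
  intro w hvw
  induction hvw with
  | refl => exact fun G hG hvG => hstar v F G hF hG hvF hvG
  | tail _ hbc ih =>
    intro G hG hcG
    obtain ⟨H, hH, hbcH⟩ := exists_isFacet_superset hb hbc
    exact (ih H hH (hbcH (mem_insert_self _ _))).trans
      (hstar _ H G hH hG (hbcH (mem_insert_of_mem (mem_singleton_self _))) hcG)

lemma IsCM.isChamberComplex {R : Type*} [CommRing R] [Nontrivial R] :
    ∀ {d : ℕ} {X : AbsSimplicialComplex V}, X.IsCM R d → X.IsChamberComplex
  | 0, _, hCM => isChamberComplex_of_isPure_zero hCM.isPure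
  | d + 1, X, hCM => by
    have hpure := hCM.isPure
    have h0 : Subsingleton (X.reducedHomology R 0) := hCM.2.1.2 0 (by omega)
    refine isChamberComplex_of_reflTransGen_isEdge hpure.1
      (fun _ _ => reflTransGen_isEdge_of_subsingleton_reducedHomology_zero h0)
      fun v F G hF hG hvF hvG => ?_
    have hlink : (X.link {v}).IsCM R d :=
      IsCM.link (by rwa [card_singleton]) (singleton_mem_faces hF.1 hvF)
    have hss {H : Finset V} (hH : X.IsFacet H) (hvH : v ∈ H) : {v} ⊂ H :=
      (singleton_subset_iff.mpr hvH).ssubset_of_ne fun h => by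
        have := hpure.2 H hH
        rw [← h, card_singleton] at this
        omega
    exact reflTransGen_adjacent_of_isChamberComplex_link hlink.isChamberComplex hF hG
      (hss hF hvF) (hss hG hvG)

end AbsSimplicialComplex

/-- every Cohen–Macaulay complex (over a field or `ℤ`) is pure and a
chamber complex. -/
theorem statement6 {V : Type u} [DecidableEq V] (R : Type) [CommRing R]
    (hR : IsField R ∨ Nonempty (R ≃+* ℤ)) (X : AbsSimplicialComplex V) (d : ℕ)
    (hCM : AbsSimplicialComplex.IsCM R X d) :
    X.IsPure d ∧ X.IsChamberComplex := by
  have : Nontrivial R := by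
    rcases hR with hfield | ⟨⟨e⟩⟩
    exacts [⟨hfield.exists_pair_ne⟩, e.toEquiv.nontrivial]
  exact ⟨hCM.isPure, hCM.isChamberComplex⟩
end

section
/- In the alternating group Alt_5, let H_1 = Stab({2}) (≅ Alt_4), H_2 = the normalizer of the cyclic group generated by (1,2,3,4,5) (≅ D_5), and H_3 = the normalizer of the cyclic group generated by (1,3,5) (≅ D_3). Then the coset complex CC(Alt_5, {H_1,H_2,H_3}) has exactly 21 vertices, 80 edges, and 60 two-dimensional simplices. -/
open scoped ContinuousMap Pointwise

set_option maxHeartbeats 1000000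
set_option synthInstance.maxHeartbeats 1000000

universe u v

open AbsSimplicialComplex

/-- The `5`-cycle `(1, 2, 3, 4, 5)` as an element of `Alt₅`. -/
def evenFiveCycle : alternatingGroup (Fin 5) :=
  ⟨finRotate 5, Equiv.Perm.mem_alternatingGroup.2 (by decide)⟩

/-- The `3`-cycle `(1, 3, 5)` as an element of `Alt₅`. -/
def evenThreeCycle : alternatingGroup (Fin 5) :=
  ⟨Equiv.swap 0 2 * Equiv.swap 2 4, Equiv.Perm.mem_alternatingGroup.2 (by decide)⟩

/-- `H₁ = Stab({2}) ≅ Alt₄`. -/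
def AltH1 : Subgroup ↥(alternatingGroup (Fin 5)) :=
  MulAction.stabilizer ↥(alternatingGroup (Fin 5)) (1 : Fin 5)

/-- `H₂ = N(⟨(1,2,3,4,5)⟩) ≅ D₅`. -/
def AltH2 : Subgroup ↥(alternatingGroup (Fin 5)) :=
  Subgroup.normalizer (Subgroup.zpowers evenFiveCycle)

/-- `H₃ = N(⟨(1,3,5)⟩) ≅ D₃`. -/
def AltH3 : Subgroup ↥(alternatingGroup (Fin 5)) :=
  Subgroup.normalizer (Subgroup.zpowers evenThreeCycle)

/-!
Left translation by `G` permutes the faces of the coset complex `CC(G, {H_i})`. When the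
subgroups are pairwise distinct, two cosets `a H_i = b H_j` force `i = j`, so every face is a
translate `g • {H_j | j ∈ J}` of a fundamental face for a unique set of types `J`, and the
stabilizer of that fundamental face is `⋂_{j ∈ J} H_j`. By orbit–stabilizer the faces with `n`
vertices number `∑_{|J| = n} [G : ⋂_{j ∈ J} H_j]`.

In `Alt₅` the indices are `5, 6, 10` for `H₁, H₂, H₃`, then `30, 20, 30` for the pairwise
intersections (`H₁ ∩ H₂ ≅ C₂`, `H₁ ∩ H₃ ≅ C₃`, `H₂ ∩ H₃ ≅ C₂`), and `60` for the trivial triple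
intersection; summing gives `21`, `80` and `60`.
-/

theorem Subgroup.eq_of_smul_coe_eq {G : Type*} [Group G] {H K : Subgroup G} {a b : G}
    (h : a • (H : Set G) = b • (K : Set G)) : H = K := by
  have hK : (b⁻¹ * a) • (H : Set G) = K := by rw [mul_smul, h, inv_smul_smul]
  have hmem : b⁻¹ * a ∈ H := by
    have h1 : (1 : G) ∈ (b⁻¹ * a) • (H : Set G) := hK ▸ K.one_mem
    rwa [mem_leftCoset_iff, mul_one, SetLike.mem_coe, inv_mem_iff] at h1
  rw [leftCoset_mem_leftCoset H hmem] at hK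
  exact SetLike.coe_injective hK

theorem Subgroup.smul_coe_eq_smul_coe_of_mem {G : Type*} [Group G] {H : Subgroup G} {g x : G}
    (hx : x ∈ g • (H : Set G)) : g • (H : Set G) = x • H :=
  (leftCoset_eq_iff H).mpr ((mem_leftCoset_iff g).mp hx)

theorem AbsSimplicialComplex.card_vertices_eq_card_singleton_faces {V : Type*}
    (X : AbsSimplicialComplex V) :
    Nat.card X.vertices = Nat.card {s // s ∈ X.faces ∧ s.card = 1} :=
  Nat.card_eq_of_bijective (fun v => ⟨{v.1}, v.2, Finset.card_singleton _⟩)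
    ⟨fun v w h => Subtype.ext (Finset.singleton_injective (congrArg Subtype.val h)),
      fun ⟨s, hs, hcard⟩ => by
        obtain ⟨v, rfl⟩ := Finset.card_eq_one.mp hcard
        exact ⟨⟨v, hs⟩, rfl⟩⟩

namespace cosetComplex

open Classical

variable {G ι : Type*} [Group G] (H : ι → Subgroup G)

noncomputable def fundamentalFace (J : Finset ι) : Finset (Set G) :=
  J.image fun j => (H j : Set G)

variable {H}

theorem mem_smul_fundamentalFace {J : Finset ι} {x : G} {A : Set G} :
    A ∈ x • fundamentalFace H J ↔ ∃ j ∈ J, x • (H j : Set G) = A := by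
  simp [fundamentalFace, Finset.mem_smul_finset]

theorem smul_fundamentalFace_mem_faces {J : Finset ι} (hJ : J.Nonempty) (x : G) :
    x • fundamentalFace H J ∈ (cosetComplex G (Set.range H)).faces := by
  refine ⟨(hJ.image _).smul_finset, ?_, x, ?_⟩
  · intro A hA
    obtain ⟨j, -, rfl⟩ := mem_smul_fundamentalFace.mp hA
    exact ⟨x, H j, Set.mem_range_self j, rfl⟩
  · simp only [Set.mem_iInter]
    intro A hA
    obtain ⟨j, -, rfl⟩ := mem_smul_fundamentalFace.mp hA
    simpa using mem_leftCoset x (H j).one_mem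

theorem exists_eq_smul_fundamentalFace [Fintype ι] {s : Finset (Set G)}
    (hs : s ∈ (cosetComplex G (Set.range H)).faces) :
    ∃ J : Finset ι, ∃ x : G, s = x • fundamentalFace H J := by
  obtain ⟨-, hcoset, x, hx⟩ := hs
  simp only [Set.mem_iInter] at hx
  refine ⟨Finset.univ.filter fun j => x • (H j : Set G) ∈ s, x, Finset.ext fun A => ?_⟩
  rw [mem_smul_fundamentalFace]
  constructor
  · intro hA
    obtain ⟨g, _, ⟨j, rfl⟩, rfl⟩ := hcoset A hA
    have hgx := Subgroup.smul_coe_eq_smul_coe_of_mem (hx _ hA)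
    exact ⟨j, Finset.mem_filter.mpr ⟨Finset.mem_univ j, hgx ▸ hA⟩, hgx.symm⟩
  · rintro ⟨j, hj, rfl⟩
    exact (Finset.mem_filter.mp hj).2

variable (hH : Function.Injective H)
include hH

theorem card_smul_fundamentalFace (J : Finset ι) (x : G) :
    (x • fundamentalFace H J).card = J.card := by
  rw [Finset.card_smul_finset]
  exact Finset.card_image_of_injective J (SetLike.coe_injective.comp hH)

theorem smul_coe_mem_smul_fundamentalFace_iff {J : Finset ι} {j : ι} {x y : G} :
    x • (H j : Set G) ∈ y • fundamentalFace H J ↔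
      j ∈ J ∧ y • (H j : Set G) = x • H j := by
  rw [mem_smul_fundamentalFace]
  constructor
  · rintro ⟨k, hk, hkj⟩
    obtain rfl := hH (Subgroup.eq_of_smul_coe_eq hkj)
    exact ⟨hk, hkj⟩
  · rintro ⟨hj, hjx⟩
    exact ⟨j, hj, hjx⟩

theorem eq_of_smul_fundamentalFace_eq {J J' : Finset ι} {x y : G}
    (h : x • fundamentalFace H J = y • fundamentalFace H J') : J = J' := by
  have subset_of_eq : ∀ {J J' : Finset ι} {x y : G},
      x • fundamentalFace H J = y • fundamentalFace H J' → J ⊆ J' := by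
    intro J J' x y h j hj
    have hmem := (smul_coe_mem_smul_fundamentalFace_iff hH (x := x) (y := x)).mpr ⟨hj, rfl⟩
    rw [h, smul_coe_mem_smul_fundamentalFace_iff hH] at hmem
    exact hmem.1
  exact (subset_of_eq h).antisymm (subset_of_eq h.symm)

theorem stabilizer_fundamentalFace (J : Finset ι) :
    MulAction.stabilizer G (fundamentalFace H J) = ⨅ j ∈ J, H j := by
  ext g
  simp only [MulAction.mem_stabilizer_iff, Subgroup.mem_iInf]
  constructor
  · intro hg j hj
    have hmem := (smul_coe_mem_smul_fundamentalFace_iff hH (x := g) (y := g)).mpr ⟨hj, rfl⟩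
    rw [hg, ← one_smul G (fundamentalFace H J), smul_coe_mem_smul_fundamentalFace_iff hH,
      leftCoset_eq_iff, inv_one, one_mul] at hmem
    exact hmem.2
  · intro hg
    ext A
    rw [mem_smul_fundamentalFace, fundamentalFace, Finset.mem_image]
    exact exists_congr fun j => and_congr_right fun hj => by
      rw [leftCoset_mem_leftCoset _ (hg j hj)]

theorem mem_faces_of_mem_orbit {n : ℕ} (hn : n ≠ 0) {J : Finset ι} (hJ : J.card = n)
    {s : Finset (Set G)} (hs : s ∈ MulAction.orbit G (fundamentalFace H J)) :
    s ∈ (cosetComplex G (Set.range H)).faces ∧ s.card = n := by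
  obtain ⟨x, rfl⟩ := hs
  exact ⟨smul_fundamentalFace_mem_faces (Finset.card_ne_zero.mp (hJ ▸ hn)) x,
    (card_smul_fundamentalFace hH J x).trans hJ⟩

theorem card_faces_eq_sum_index [Finite G] [Fintype ι] {n : ℕ} (hn : n ≠ 0) :
    Nat.card {s // s ∈ (cosetComplex G (Set.range H)).faces ∧ s.card = n} =
      ∑ J ∈ Finset.univ.powersetCard n, (⨅ j ∈ J, H j).index := by
  let toFace : (Σ J : Finset.univ.powersetCard n, MulAction.orbit G (fundamentalFace H J.1)) →
      {s // s ∈ (cosetComplex G (Set.range H)).faces ∧ s.card = n} := fun p =>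
    ⟨p.2, mem_faces_of_mem_orbit hH hn (Finset.mem_powersetCard.mp p.1.2).2 p.2.2⟩
  have hbij : toFace.Bijective := by
    constructor
    · rintro ⟨J, s, x, rfl⟩ ⟨J', s', x', rfl⟩ h
      have hJ : J = J' := Subtype.ext (eq_of_smul_fundamentalFace_eq hH (congrArg Subtype.val h))
      exact Sigma.subtype_ext hJ (congrArg Subtype.val h)
    · rintro ⟨s, hs, hcard⟩
      obtain ⟨J, x, rfl⟩ := exists_eq_smul_fundamentalFace hs
      have hJ : J ∈ Finset.univ.powersetCard n := Finset.mem_powersetCard.mpr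
        ⟨Finset.subset_univ J, card_smul_fundamentalFace hH J x ▸ hcard⟩
      exact ⟨⟨⟨J, hJ⟩, _, x, rfl⟩, rfl⟩
  rw [← Nat.card_eq_of_bijective toFace hbij, Nat.card_sigma]
  refine (Finset.sum_coe_sort _ fun J => Nat.card (MulAction.orbit G (fundamentalFace H J))).trans
    (Finset.sum_congr rfl fun J _ => ?_)
  rw [← stabilizer_fundamentalFace hH, MulAction.index_stabilizer, Nat.card_coe_set_eq]

end cosetComplex

theorem Subgroup.mem_normalizer_zpowers_iff {G : Type*} [Group G] [Finite G] {c x : G} :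
    x ∈ normalizer (zpowers c) ↔ x * c * x⁻¹ ∈ zpowers c := by
  refine ⟨fun hx => (mem_normalizer_iff.mp hx c).mp (mem_zpowers c),
    fun hx => mem_normalizer_fintype ?_⟩
  rintro _ ⟨k, rfl⟩
  simpa only [SetLike.mem_coe, ← MulAut.conj_apply, map_zpow] using zpow_mem hx k

theorem Subgroup.nat_card_eq_card_filter {G : Type*} [Group G] [Fintype G] (K : Subgroup G)
    {p : G → Prop} [DecidablePred p] (h : ∀ x, x ∈ K ↔ p x) :
    Nat.card K = (Finset.univ.filter p).card := by
  rw [Nat.card_congr (Equiv.subtypeEquivRight h), Nat.card_eq_fintype_card,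
    Fintype.card_subtype]

theorem mem_AltH1_iff {x : alternatingGroup (Fin 5)} :
    x ∈ AltH1 ↔ (x : Equiv.Perm (Fin 5)) 1 = 1 :=
  Iff.rfl

theorem mem_AltH2_iff {x : alternatingGroup (Fin 5)} :
    x ∈ AltH2 ↔ x * evenFiveCycle * x⁻¹ ∈ (Finset.range 5).image (evenFiveCycle ^ ·) := by
  have : Fact (Nat.Prime 5) := ⟨Nat.prime_five⟩
  rw [AltH2, Subgroup.mem_normalizer_zpowers_iff, mem_zpowers_iff_mem_range_orderOf,
    orderOf_eq_prime (p := 5) (by decide) (by decide)]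

theorem mem_AltH3_iff {x : alternatingGroup (Fin 5)} :
    x ∈ AltH3 ↔
      x * evenThreeCycle * x⁻¹ ∈ (Finset.range 3).image (evenThreeCycle ^ ·) := by
  rw [AltH3, Subgroup.mem_normalizer_zpowers_iff, mem_zpowers_iff_mem_range_orderOf,
    orderOf_eq_prime (p := 3) (by decide) (by decide)]

theorem index_eq_sixty_div_card (K : Subgroup (alternatingGroup (Fin 5))) :
    K.index = 60 / Nat.card K := by
  have hcard : Nat.card (alternatingGroup (Fin 5)) = 60 := by
    rw [nat_card_alternatingGroup, Nat.card_fin]; rfl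
  rw [← hcard, ← K.index_mul_card, Nat.mul_div_cancel _ Nat.card_pos]

theorem index_AltH1 : AltH1.index = 5 := by
  rw [index_eq_sixty_div_card, AltH1.nat_card_eq_card_filter fun _ => mem_AltH1_iff]
  decide

theorem index_AltH2 : AltH2.index = 6 := by
  rw [index_eq_sixty_div_card, AltH2.nat_card_eq_card_filter fun _ => mem_AltH2_iff]
  decide

theorem index_AltH3 : AltH3.index = 10 := by
  rw [index_eq_sixty_div_card, AltH3.nat_card_eq_card_filter fun _ => mem_AltH3_iff]
  decide

theorem index_AltH1_inf_AltH2 : (AltH1 ⊓ AltH2).index = 30 := by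
  rw [index_eq_sixty_div_card, Subgroup.nat_card_eq_card_filter _ fun _ =>
    Subgroup.mem_inf.trans (and_congr mem_AltH1_iff mem_AltH2_iff)]
  decide

theorem index_AltH1_inf_AltH3 : (AltH1 ⊓ AltH3).index = 20 := by
  rw [index_eq_sixty_div_card, Subgroup.nat_card_eq_card_filter _ fun _ =>
    Subgroup.mem_inf.trans (and_congr mem_AltH1_iff mem_AltH3_iff)]
  decide

theorem index_AltH2_inf_AltH3 : (AltH2 ⊓ AltH3).index = 30 := by
  rw [index_eq_sixty_div_card, Subgroup.nat_card_eq_card_filter _ fun _ =>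
    Subgroup.mem_inf.trans (and_congr mem_AltH2_iff mem_AltH3_iff)]
  decide

theorem index_AltH1_inf_AltH2_inf_AltH3 : (AltH1 ⊓ (AltH2 ⊓ AltH3)).index = 60 := by
  rw [index_eq_sixty_div_card, Subgroup.nat_card_eq_card_filter _ fun _ =>
    Subgroup.mem_inf.trans (and_congr mem_AltH1_iff
      (Subgroup.mem_inf.trans (and_congr mem_AltH2_iff mem_AltH3_iff)))]
  decide

local notation "𝓗" => ![AltH1, AltH2, AltH3]

theorem range_AltH : Set.range 𝓗 = {AltH1, AltH2, AltH3} := by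
  simp [Set.ext_iff, or_comm, or_left_comm]

theorem injective_AltH : Function.Injective 𝓗 := by
  intro i j h
  have hindex := congrArg Subgroup.index h
  fin_cases i <;> fin_cases j <;> simp [index_AltH1, index_AltH2, index_AltH3] at hindex ⊢

theorem sum_index_AltH_one :
    ∑ J ∈ Finset.univ.powersetCard 1, (⨅ j ∈ J, 𝓗 j).index = 21 := by
  simp [Finset.powersetCard_one, Fin.sum_univ_three, index_AltH1, index_AltH2, index_AltH3]

theorem sum_index_AltH_two :
    ∑ J ∈ Finset.univ.powersetCard 2, (⨅ j ∈ J, 𝓗 j).index = 80 := by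
  rw [show (Finset.univ.powersetCard 2 : Finset (Finset (Fin 3))) = {{0, 1}, {0, 2}, {1, 2}} by
      decide, Finset.sum_insert (by decide), Finset.sum_insert (by decide), Finset.sum_singleton]
  simp only [Finset.iInf_insert, Finset.iInf_singleton]
  simp [index_AltH1_inf_AltH2, index_AltH1_inf_AltH3, index_AltH2_inf_AltH3]

theorem sum_index_AltH_three :
    ∑ J ∈ Finset.univ.powersetCard 3, (⨅ j ∈ J, 𝓗 j).index = 60 := by
  rw [show (Finset.univ.powersetCard 3 : Finset (Finset (Fin 3))) = {{0, 1, 2}} by decide,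
    Finset.sum_singleton]
  simp only [Finset.iInf_insert, Finset.iInf_singleton]
  simp [index_AltH1_inf_AltH2_inf_AltH3]

/-- the coset complex `CC(Alt₅, {H₁, H₂, H₃})` has exactly `21`
vertices, `80` edges and `60` two-dimensional simplices. -/
theorem statement13 :
    Nat.card {A : Set ↥(alternatingGroup (Fin 5)) //
        A ∈ (cosetComplex ↥(alternatingGroup (Fin 5)) {AltH1, AltH2, AltH3}).vertices} = 21 ∧
    Nat.card {s : Finset (Set ↥(alternatingGroup (Fin 5))) //
        s ∈ (cosetComplex ↥(alternatingGroup (Fin 5)) {AltH1, AltH2, AltH3}).faces ∧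
        s.card = 2} = 80 ∧
    Nat.card {s : Finset (Set ↥(alternatingGroup (Fin 5))) //
        s ∈ (cosetComplex ↥(alternatingGroup (Fin 5)) {AltH1, AltH2, AltH3}).faces ∧
        s.card = 3} = 60 := by
  rw [← range_AltH]
  refine ⟨(AbsSimplicialComplex.card_vertices_eq_card_singleton_faces _).trans ?_, ?_, ?_⟩
  · rw [cosetComplex.card_faces_eq_sum_index injective_AltH one_ne_zero, sum_index_AltH_one]
  · rw [cosetComplex.card_faces_eq_sum_index injective_AltH two_ne_zero, sum_index_AltH_two]
  · rw [cosetComplex.card_faces_eq_sum_index injective_AltH three_ne_zero, sum_index_AltH_three]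
end

section
/- With H_1, H_2, H_3 as above in Alt_5, for every pair {H_i, H_j} of distinct subgroups, the coset complex CC(Alt_5, {H_i, H_j}) is connected; equivalently, Alt_5 is generated by H_i ∪ H_j for every i ≠ j. -/
open scoped ContinuousMap Pointwise

set_option maxHeartbeats 1000000
set_option synthInstance.maxHeartbeats 1000000

universe u v

open AbsSimplicialComplex

/-!
If the subgroups in `H` generate `G`, every vertex `g • J₀` of the coset complex is joined to
`J₀`: for `y ∈ J ∈ H` the cosets `g y • J₀`, `g y • J = g • J` and `g • J₀` are linked by the edges
through `g y` and `g`, so right multiplication by generators stays in one path component. Every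
point of the realisation lies on a segment to a vertex of its face, hence the realisation is
path connected.

In `Alt₅`, each of the three joins `H_i ⊔ H_j` contains elements of orders 2, 3 and 5, so its
order is divisible by 30 and its index is at most 2; an index-2 subgroup would be normal,
contradicting the simplicity of `Alt₅`.
-/

namespace AbsSimplicialComplex

variable {V : Type u} {X : AbsSimplicialComplex V}

theorem mem_vertices_of_mem_face {s : Finset V} (hs : s ∈ X.faces) {v : V} (hv : v ∈ s) :
    v ∈ X.vertices :=
  X.down_closed hs (Finset.singleton_subset_iff.2 hv) (Finset.singleton_nonempty v)

theorem sum_eq_one_of_eq_zero_off (p : geomReal X) {s : Finset V}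
    (hs : ∀ v ∉ s, p.1 v = 0) : ∑ v ∈ s, p.1 v = 1 := by
  classical
  obtain ⟨t, -, ht, -, hsum⟩ := p.2
  calc ∑ v ∈ s, p.1 v = ∑ v ∈ s ∩ t, p.1 v :=
        (Finset.sum_subset Finset.inter_subset_left fun v hvs hv =>
          ht v fun hvt => hv (Finset.mem_inter.2 ⟨hvs, hvt⟩)).symm
    _ = ∑ v ∈ t, p.1 v :=
        Finset.sum_subset Finset.inter_subset_right fun v hvt hv =>
          hs v fun hvs => hv (Finset.mem_inter.2 ⟨hvs, hvt⟩)
    _ = 1 := hsum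

theorem joined_of_eq_zero_off {s : Finset V} (hs : s ∈ X.faces) {p q : geomReal X}
    (hp : ∀ v ∉ s, p.1 v = 0) (hq : ∀ v ∉ s, q.1 v = 0) : Joined p q := by
  refine JoinedIn.joined_subtype (JoinedIn.of_segment_subset ?_)
  rintro _ ⟨a, b, ha, hb, hab, rfl⟩
  obtain ⟨-, -, -, hp₀, -⟩ := p.2
  obtain ⟨-, -, -, hq₀, -⟩ := q.2
  refine ⟨s, hs, fun v hv => by simp [hp v hv, hq v hv], fun v => ?_, ?_⟩
  · simp only [Pi.add_apply, Pi.smul_apply, smul_eq_mul]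
    exact add_nonneg (mul_nonneg ha (hp₀ v)) (mul_nonneg hb (hq₀ v))
  · simp only [Pi.add_apply, Pi.smul_apply, smul_eq_mul, Finset.sum_add_distrib,
      ← Finset.mul_sum, sum_eq_one_of_eq_zero_off p hp, sum_eq_one_of_eq_zero_off q hq]
    simpa using hab

noncomputable def vertexPt {v : V} (hv : v ∈ X.vertices) : geomReal X :=
  ⟨Set.indicator {v} 1, {v}, hv, fun w hw => Set.indicator_of_notMem (by simpa using hw) _,
    fun w => Set.indicator_nonneg (fun _ _ => zero_le_one) w, by simp⟩

theorem vertexPt_eq_zero_off {v : V} (hv : v ∈ X.vertices) {s : Finset V} (hvs : v ∈ s) :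
    ∀ w ∉ s, (vertexPt hv).1 w = 0 := fun w hw =>
  Set.indicator_of_notMem (by rintro rfl; exact hw hvs) _

theorem vertexPt_congr {v w : V} (h : v = w) (hv : v ∈ X.vertices) :
    vertexPt hv = vertexPt (h ▸ hv) := by
  subst h; rfl

theorem joined_vertexPt {s : Finset V} (hs : s ∈ X.faces) {v w : V} (hv : v ∈ s) (hw : w ∈ s) :
    Joined (vertexPt (mem_vertices_of_mem_face hs hv))
      (vertexPt (mem_vertices_of_mem_face hs hw)) :=
  joined_of_eq_zero_off hs (vertexPt_eq_zero_off _ hv) (vertexPt_eq_zero_off _ hw)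

theorem pathConnectedSpace_geomReal_of_joined_vertexPt {v₀ : V} (h₀ : v₀ ∈ X.vertices)
    (h : ∀ v (hv : v ∈ X.vertices), Joined (vertexPt hv) (vertexPt h₀)) :
    PathConnectedSpace (geomReal X) := by
  have joined_base (p : geomReal X) : Joined p (vertexPt h₀) := by
    obtain ⟨s, hs, hp, -⟩ := p.2
    obtain ⟨v, hv⟩ := X.nonempty_of_mem hs
    have hv' := mem_vertices_of_mem_face hs hv
    exact (joined_of_eq_zero_off hs hp (vertexPt_eq_zero_off hv' hv)).trans (h v hv')
  exact ⟨⟨vertexPt h₀⟩, fun p q => (joined_base p).trans (joined_base q).symm⟩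

end AbsSimplicialComplex

theorem isNConnectedSpace_zero_of_pathConnectedSpace (X : Type*) [TopologicalSpace X]
    [PathConnectedSpace X] : IsNConnectedSpace X 0 := by
  refine ⟨fun _ => inferInstance, fun k hk x => ?_⟩
  obtain rfl : k = 0 := by omega
  have := (pathConnectedSpace_iff_zerothHomotopy.1 ‹_›).2
  exact (homotopyGroupEquivZerothHomotopyOfIsEmpty (Fin 0) x).subsingleton

namespace cosetComplex

variable {G : Type*} [Group G] {H : Set (Subgroup G)}

theorem smul_mem_faces {J₁ J₂ : Subgroup G} (h₁ : J₁ ∈ H) (h₂ : J₂ ∈ H) (g : G) :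
    {g • (J₁ : Set G), g • (J₂ : Set G)} ∈ (cosetComplex G H).faces := by
  refine ⟨Finset.insert_nonempty _ _, ?_, g, ?_⟩
  · simp only [Finset.mem_insert, Finset.mem_singleton]
    rintro A (rfl | rfl)
    exacts [⟨g, J₁, h₁, rfl⟩, ⟨g, J₂, h₂, rfl⟩]
  · simp only [Set.mem_iInter, Finset.mem_insert, Finset.mem_singleton]
    rintro A (rfl | rfl) <;> exact ⟨1, one_mem _, mul_one g⟩

theorem smul_mem_vertices {J : Subgroup G} (hJ : J ∈ H) (g : G) :
    g • (J : Set G) ∈ (cosetComplex G H).vertices :=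
  mem_vertices_of_mem_face (smul_mem_faces hJ hJ g) (Finset.mem_insert_self _ _)

noncomputable def cosetPt {J : Subgroup G} (hJ : J ∈ H) (g : G) : geomReal (cosetComplex G H) :=
  vertexPt (smul_mem_vertices hJ g)

theorem joined_cosetPt {J₁ J₂ : Subgroup G} (h₁ : J₁ ∈ H) (h₂ : J₂ ∈ H) (g : G) :
    Joined (cosetPt h₁ g) (cosetPt h₂ g) :=
  joined_vertexPt (smul_mem_faces h₁ h₂ g) (Finset.mem_insert_self _ _)
    (Finset.mem_insert_of_mem (Finset.mem_singleton_self _))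

theorem cosetPt_mul_of_mem {J : Subgroup G} (hJ : J ∈ H) (g : G) {y : G} (hy : y ∈ J) :
    cosetPt hJ (g * y) = cosetPt hJ g :=
  vertexPt_congr (by rw [mul_smul, smul_coe_set hy]) _

theorem joined_cosetPt_mul {J₀ J : Subgroup G} (h₀ : J₀ ∈ H) (hJ : J ∈ H) (g : G) {y : G}
    (hy : y ∈ J) : Joined (cosetPt h₀ (g * y)) (cosetPt h₀ g) := by
  have h := joined_cosetPt hJ h₀ g
  rw [← cosetPt_mul_of_mem hJ g hy] at h
  exact (joined_cosetPt h₀ hJ (g * y)).trans h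

theorem joined_cosetPt_one {J₀ : Subgroup G} (h₀ : J₀ ∈ H) (hH : sSup H = ⊤) (g : G) :
    Joined (cosetPt h₀ g) (cosetPt h₀ 1) := by
  have hg : g ∈ Subgroup.closure (⋃ J : H, (J : Set G)) := by
    rw [← Subgroup.iSup_eq_closure, ← sSup_eq_iSup', hH]
    trivial
  induction hg using Subgroup.closure_induction_right with
  | one => rfl
  | mul_right x _ y hy ih =>
    obtain ⟨⟨J, hJ⟩, hy⟩ := Set.mem_iUnion.1 hy
    exact (joined_cosetPt_mul h₀ hJ x hy).trans ih
  | mul_inv_cancel x _ y hy ih =>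
    obtain ⟨⟨J, hJ⟩, hy⟩ := Set.mem_iUnion.1 hy
    exact (joined_cosetPt_mul h₀ hJ x (inv_mem hy)).trans ih

theorem pathConnectedSpace_geomReal_of_sSup_eq_top (hne : H.Nonempty) (hH : sSup H = ⊤) :
    PathConnectedSpace (geomReal (cosetComplex G H)) := by
  obtain ⟨J₀, h₀⟩ := hne
  refine pathConnectedSpace_geomReal_of_joined_vertexPt (smul_mem_vertices h₀ 1) fun v hv => ?_
  obtain ⟨g, J, hJ, rfl⟩ := hv.2.1 v (Finset.mem_singleton_self v)
  exact (joined_cosetPt hJ h₀ g).trans (joined_cosetPt_one h₀ hH g)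

end cosetComplex

theorem Subgroup.mem_normalizer_zpowers_of_mul_mul_inv_eq_inv {G : Type*} [Group G] {g t : G}
    (h : g * t * g⁻¹ = t⁻¹) : g ∈ Subgroup.normalizer (Subgroup.zpowers t) := by
  rw [Subgroup.mem_normalizer_iff_map_conj_eq, MonoidHom.map_zpowers]
  simp [h]

theorem IsSimpleGroup.eq_top_of_index_dvd_two {G : Type*} [Group G] [IsSimpleGroup G]
    (hG : 2 < Nat.card G) {M : Subgroup G} (hM : M.index ∣ 2) : M = ⊤ := by
  rcases (Nat.dvd_prime Nat.prime_two).1 hM with h | h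
  · exact Subgroup.index_eq_one.1 h
  · have := Subgroup.normal_of_index_eq_two h
    refine (eq_bot_or_eq_top_of_normal M this).resolve_left fun hbot => ?_
    rw [hbot, Subgroup.index_bot] at h
    omega

theorem Subgroup.thirty_dvd_card {G : Type*} [Group G] {M : Subgroup G} {a b c : G}
    (ha : a ∈ M) (hb : b ∈ M) (hc : c ∈ M)
    (ha₂ : orderOf a = 2) (hb₃ : orderOf b = 3) (hc₅ : orderOf c = 5) : 30 ∣ Nat.card M := by
  have h₂ : 2 ∣ Nat.card M := ha₂ ▸ M.orderOf_dvd_natCard ha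
  have h₃ : 3 ∣ Nat.card M := hb₃ ▸ M.orderOf_dvd_natCard hb
  have h₅ : 5 ∣ Nat.card M := hc₅ ▸ M.orderOf_dvd_natCard hc
  omega

theorem card_alternatingGroup_five : Nat.card (alternatingGroup (Fin 5)) = 60 := by
  rw [Nat.card_eq_fintype_card, card_alternatingGroup]; rfl

theorem alternatingGroup_five_eq_top_of_thirty_dvd_card {M : Subgroup (alternatingGroup (Fin 5))}
    (h : 30 ∣ Nat.card M) : M = ⊤ := by
  refine IsSimpleGroup.eq_top_of_index_dvd_two (by rw [card_alternatingGroup_five]; norm_num) ?_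
  have := M.card_mul_index
  rw [card_alternatingGroup_five] at this
  obtain ⟨k, hk⟩ := h
  exact ⟨k, by nlinarith⟩

instance Nat.fact_prime_five : Fact (Nat.Prime 5) := ⟨Nat.prime_five⟩

section AltFive

open Equiv Subgroup

theorem exists_mem_AltH1_orderOf_eq_two : ∃ a ∈ AltH1, orderOf a = 2 :=
  ⟨⟨swap 0 3 * swap 2 4, Perm.mem_alternatingGroup.2 (by decide)⟩,
    MulAction.mem_stabilizer_iff.2 (by decide), orderOf_eq_prime (by decide) (by decide)⟩

theorem exists_mem_AltH1_orderOf_eq_three : ∃ b ∈ AltH1, orderOf b = 3 :=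
  ⟨evenThreeCycle, MulAction.mem_stabilizer_iff.2 (by decide),
    orderOf_eq_prime (by decide) (by decide)⟩

theorem exists_mem_AltH2_orderOf_eq_five : ∃ c ∈ AltH2, orderOf c = 5 :=
  ⟨evenFiveCycle, le_normalizer (mem_zpowers _), orderOf_eq_prime (by decide) (by decide)⟩

theorem exists_mem_AltH3_orderOf_eq_two : ∃ a ∈ AltH3, orderOf a = 2 :=
  ⟨⟨swap 0 2 * swap 1 3, Perm.mem_alternatingGroup.2 (by decide)⟩,
    mem_normalizer_zpowers_of_mul_mul_inv_eq_inv (by decide),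
    orderOf_eq_prime (by decide) (by decide)⟩

theorem exists_mem_AltH3_orderOf_eq_three : ∃ b ∈ AltH3, orderOf b = 3 :=
  ⟨evenThreeCycle, le_normalizer (mem_zpowers _), orderOf_eq_prime (by decide) (by decide)⟩

/-- Neither `H₁ ≅ Alt₄` nor `H₃ ≅ Sym₃` contains an element of order 5, but the product of
an involution from each does. -/
theorem exists_mem_AltH1_sup_AltH3_orderOf_eq_five : ∃ c ∈ AltH1 ⊔ AltH3, orderOf c = 5 := by
  let u : alternatingGroup (Fin 5) :=
    ⟨swap 0 2 * swap 1 3, Perm.mem_alternatingGroup.2 (by decide)⟩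
  let w : alternatingGroup (Fin 5) :=
    ⟨swap 0 3 * swap 2 4, Perm.mem_alternatingGroup.2 (by decide)⟩
  have hu : u ∈ AltH3 := mem_normalizer_zpowers_of_mul_mul_inv_eq_inv (by decide)
  have hw : w ∈ AltH1 := MulAction.mem_stabilizer_iff.2 (by decide)
  exact ⟨u * w, mul_mem (mem_sup_right hu) (mem_sup_left hw),
    orderOf_eq_prime (by decide) (by decide)⟩

theorem AltH1_sup_AltH2 : AltH1 ⊔ AltH2 = ⊤ := by
  obtain ⟨a, ha, ha₂⟩ := exists_mem_AltH1_orderOf_eq_two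
  obtain ⟨b, hb, hb₃⟩ := exists_mem_AltH1_orderOf_eq_three
  obtain ⟨c, hc, hc₅⟩ := exists_mem_AltH2_orderOf_eq_five
  exact alternatingGroup_five_eq_top_of_thirty_dvd_card <|
    thirty_dvd_card (mem_sup_left ha) (mem_sup_left hb) (mem_sup_right hc) ha₂ hb₃ hc₅

theorem AltH1_sup_AltH3 : AltH1 ⊔ AltH3 = ⊤ := by
  obtain ⟨a, ha, ha₂⟩ := exists_mem_AltH1_orderOf_eq_two
  obtain ⟨b, hb, hb₃⟩ := exists_mem_AltH1_orderOf_eq_three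
  obtain ⟨c, hc, hc₅⟩ := exists_mem_AltH1_sup_AltH3_orderOf_eq_five
  exact alternatingGroup_five_eq_top_of_thirty_dvd_card <|
    thirty_dvd_card (mem_sup_left ha) (mem_sup_left hb) hc ha₂ hb₃ hc₅

theorem AltH2_sup_AltH3 : AltH2 ⊔ AltH3 = ⊤ := by
  obtain ⟨a, ha, ha₂⟩ := exists_mem_AltH3_orderOf_eq_two
  obtain ⟨b, hb, hb₃⟩ := exists_mem_AltH3_orderOf_eq_three
  obtain ⟨c, hc, hc₅⟩ := exists_mem_AltH2_orderOf_eq_five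
  exact alternatingGroup_five_eq_top_of_thirty_dvd_card <|
    thirty_dvd_card (mem_sup_right ha) (mem_sup_right hb) (mem_sup_left hc) ha₂ hb₃ hc₅

end AltFive

/-- for every pair of distinct subgroups among `H₁, H₂, H₃`, the
coset complex `CC(Alt₅, {H_i, H_j})` is connected; equivalently `Alt₅` is
generated by `H_i ∪ H_j`. -/
theorem statement14 :
    ∀ K L : Subgroup ↥(alternatingGroup (Fin 5)),
      K ∈ ({AltH1, AltH2, AltH3} : Set (Subgroup ↥(alternatingGroup (Fin 5)))) →
      L ∈ ({AltH1, AltH2, AltH3} : Set (Subgroup ↥(alternatingGroup (Fin 5)))) →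
      K ≠ L →
      IsNConnectedSpace
        (AbsSimplicialComplex.geomReal (cosetComplex ↥(alternatingGroup (Fin 5)) {K, L}))
        0 ∧
      K ⊔ L = ⊤ := by
  intro K L hK hL hKL
  have hsup : K ⊔ L = ⊤ := by
    simp only [Set.mem_insert_iff, Set.mem_singleton_iff] at hK hL
    rcases hK with rfl | rfl | rfl <;> rcases hL with rfl | rfl | rfl <;>
      first
      | exact absurd rfl hKL
      | simp only [AltH1_sup_AltH2, AltH1_sup_AltH3, AltH2_sup_AltH3, sup_comm]
  have := cosetComplex.pathConnectedSpace_geomReal_of_sSup_eq_top (Set.insert_nonempty K {L})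
    (sSup_pair.trans hsup)
  exact ⟨isNConnectedSpace_zero_of_pathConnectedSpace _, hsup⟩
end

section
/- Let X be a simplicial complex of dimension d and s ≥ −1. Then the complement of the s-skeleton, |X| \ |X^{(s)}|, is homotopy equivalent to a CW complex (indeed a simplicial complex) of dimension at most d−s−1. -/
open scoped ContinuousMap Pointwise

set_option maxHeartbeats 1000000
set_option synthInstance.maxHeartbeats 1000000

universe u v

open AbsSimplicialComplex

namespace St18
open Finset
open scoped Classical

universe w
variable {V : Type w} {Z : AbsSimplicialComplex V}

noncomputable def suppF (p : geomReal Z) : Finset V :=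
  p.2.choose.filter (fun v => p.1 v ≠ 0)

lemma face_spec (p : geomReal Z) :
    p.2.choose ∈ Z.faces ∧ (∀ v ∉ p.2.choose, p.1 v = 0) ∧ (∀ v, 0 ≤ p.1 v) ∧
      ∑ v ∈ p.2.choose, p.1 v = 1 := p.2.choose_spec

lemma pt_nonneg (p : geomReal Z) (v : V) : 0 ≤ p.1 v := (face_spec p).2.2.1 v

lemma mem_suppF {p : geomReal Z} {v : V} : v ∈ suppF p ↔ p.1 v ≠ 0 := by
  constructor
  · intro h; exact (Finset.mem_filter.1 h).2
  · intro h
    refine Finset.mem_filter.2 ⟨?_, h⟩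
    by_contra hv
    exact h ((face_spec p).2.1 v hv)

lemma suppF_subset_face (p : geomReal Z) : suppF p ⊆ p.2.choose :=
  Finset.filter_subset _ _

lemma sum_suppF (p : geomReal Z) : ∑ v ∈ suppF p, p.1 v = 1 := by
  rw [Finset.sum_subset (suppF_subset_face p) (fun v _ hv => by
    by_contra h; exact hv (mem_suppF.2 h))]
  exact (face_spec p).2.2.2

lemma sum_eq_one_of_suppF_subset (p : geomReal Z) {t : Finset V} (h : suppF p ⊆ t) :
    ∑ v ∈ t, p.1 v = 1 := by
  have h2 := Finset.sum_subset h (fun v _ hv => by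
    by_contra hc; exact hv (mem_suppF.2 hc))
  rw [← h2]; exact sum_suppF p

lemma sum_le_one (p : geomReal Z) (t : Finset V) : ∑ v ∈ t, p.1 v ≤ 1 := by
  have h1 : ∑ v ∈ t, p.1 v ≤ ∑ v ∈ t ∪ suppF p, p.1 v :=
    Finset.sum_le_sum_of_subset_of_nonneg Finset.subset_union_left
      (fun v _ _ => pt_nonneg p v)
  rw [sum_eq_one_of_suppF_subset p Finset.subset_union_right] at h1
  exact h1

lemma apply_le_one_sub_sum (p : geomReal Z) {t : Finset V} {w : V} (hw : w ∉ t) :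
    p.1 w ≤ 1 - ∑ v ∈ t, p.1 v := by
  have := sum_le_one p (insert w t)
  rw [Finset.sum_insert hw] at this
  linarith

lemma pt_le_one (p : geomReal Z) (v : V) : p.1 v ≤ 1 := by
  simpa using apply_le_one_sub_sum p (t := ∅) (w := v) (by simp)

lemma suppF_nonempty (p : geomReal Z) : (suppF p).Nonempty := by
  rcases Finset.eq_empty_or_nonempty (suppF p) with h | h
  · have := sum_suppF p
    rw [h] at this
    simp at this
  · exact h

lemma continuous_eval (v : V) : Continuous (fun p : geomReal Z => p.1 v) :=
  (continuous_apply v).comp continuous_subtype_val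

end St18
namespace St18
open Finset
open scoped Classical

universe w
variable {V : Type w}

/-- max of `f` over `S \ σ`, at least `0`. -/
noncomputable def bigB (f : V → ℝ) (S σ : Finset V) : ℝ :=
  if h : (S \ σ).Nonempty then max ((S \ σ).sup' h f) 0 else 0

lemma bigB_nonneg (f : V → ℝ) (S σ : Finset V) : 0 ≤ bigB f S σ := by
  unfold bigB; split
  · exact le_max_right _ _
  · exact le_refl 0

lemma le_bigB {f : V → ℝ} {S σ : Finset V} {v : V} (hv : v ∈ S) (hvs : v ∉ σ) :
    f v ≤ bigB f S σ := by
  have hmem : v ∈ S \ σ := Finset.mem_sdiff.2 ⟨hv, hvs⟩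
  unfold bigB
  rw [dif_pos ⟨v, hmem⟩]
  exact le_trans (Finset.le_sup' f hmem) (le_max_left _ _)

lemma bigB_le {f : V → ℝ} {S σ : Finset V} {c : ℝ} (hc : 0 ≤ c)
    (h : ∀ v ∈ S, v ∉ σ → f v ≤ c) : bigB f S σ ≤ c := by
  unfold bigB; split
  · exact max_le (Finset.sup'_le _ _ fun v hv =>
      h v (Finset.mem_sdiff.1 hv).1 (Finset.mem_sdiff.1 hv).2) hc
  · exact hc

lemma bigB_mem {f : V → ℝ} {S σ : Finset V} :
    bigB f S σ = 0 ∨ ∃ v ∈ S, v ∉ σ ∧ f v = bigB f S σ := by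
  unfold bigB; split
  · rename_i h
    rcases le_total ((S \ σ).sup' h f) 0 with h0 | h0
    · left; exact max_eq_right h0
    · right
      obtain ⟨v, hv, hveq⟩ := Finset.exists_mem_eq_sup' h f
      exact ⟨v, (Finset.mem_sdiff.1 hv).1, (Finset.mem_sdiff.1 hv).2,
        by rw [max_eq_left h0, hveq]⟩
  · left; rfl

lemma bigB_mono {f : V → ℝ} {S₁ S₂ σ : Finset V} (h : S₁ ⊆ S₂) (h0 : 0 ≤ bigB f S₂ σ) :
    bigB f S₁ σ ≤ bigB f S₂ σ :=
  bigB_le h0 fun v hv hvs => le_bigB (h hv) hvs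

lemma bigB_congr {f : V → ℝ} {S₁ S₂ σ : Finset V}
    (h1 : ∀ v ∈ S₁, v ∉ S₂ → f v = 0) (h2 : ∀ v ∈ S₂, v ∉ S₁ → f v = 0) :
    bigB f S₁ σ = bigB f S₂ σ := by
  have key : ∀ (T₁ T₂ : Finset V), (∀ v ∈ T₁, v ∉ T₂ → f v = 0) →
      bigB f T₁ σ ≤ bigB f T₂ σ := by
    intro T₁ T₂ hT
    refine bigB_le (bigB_nonneg _ _ _) fun v hv hvs => ?_
    by_cases hv2 : v ∈ T₂
    · exact le_bigB hv2 hvs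
    · rw [hT v hv hv2]; exact bigB_nonneg _ _ _
  exact le_antisymm (key _ _ h1) (key _ _ h2)

/-- The weight of `σ` in the barycentric coordinates of `f`. -/
noncomputable def eV (f : V → ℝ) (S σ : Finset V) : ℝ :=
  if h : σ.Nonempty then max (σ.inf' h f - bigB f S σ) 0 else 0

lemma eV_nonneg (f : V → ℝ) (S σ : Finset V) : 0 ≤ eV f S σ := by
  unfold eV; split
  · exact le_max_right _ _
  · exact le_refl 0

lemma eV_ne_zero_iff {f : V → ℝ} {S σ : Finset V} :
    eV f S σ ≠ 0 ↔ ∃ h : σ.Nonempty, bigB f S σ < σ.inf' h f := by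
  unfold eV
  constructor
  · intro he
    rcases Classical.em σ.Nonempty with h | h
    · rw [dif_pos h] at he
      refine ⟨h, ?_⟩
      by_contra hle
      push_neg at hle
      exact he (max_eq_right (by linarith))
    · rw [dif_neg h] at he; exact absurd rfl he
  · rintro ⟨h, hlt⟩
    rw [dif_pos h]
    have : (0:ℝ) < σ.inf' h f - bigB f S σ := by linarith
    rw [max_eq_left (le_of_lt this)]
    linarith

lemma eV_eq_of_ne_zero {f : V → ℝ} {S σ : Finset V} (he : eV f S σ ≠ 0)
    (h : σ.Nonempty) : eV f S σ = σ.inf' h f - bigB f S σ := by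
  obtain ⟨h', hlt⟩ := eV_ne_zero_iff.1 he
  unfold eV
  rw [dif_pos h]
  exact max_eq_left (by linarith [hlt])

section props
variable {f : V → ℝ} {S : Finset V} (h0 : ∀ v, 0 ≤ f v) (hS : ∀ v, v ∉ S → f v = 0)

include h0 hS in
lemma cut_pos_on {σ : Finset V} (he : eV f S σ ≠ 0) {v : V} (hv : v ∈ σ) :
    bigB f S σ < f v := by
  obtain ⟨h, hlt⟩ := eV_ne_zero_iff.1 he
  exact lt_of_lt_of_le hlt (Finset.inf'_le f hv)

include h0 hS in
lemma cut_subset {σ : Finset V} (he : eV f S σ ≠ 0) : σ ⊆ S := by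
  intro v hv
  by_contra hvS
  have h1 := cut_pos_on h0 hS he hv
  have h2 := bigB_nonneg f S σ
  rw [hS v hvS] at h1
  linarith

include h0 hS in
lemma cut_sep {σ : Finset V} (he : eV f S σ ≠ 0) {v w : V} (hv : v ∈ σ) (hw : w ∉ σ) :
    f w < f v := by
  have h1 := cut_pos_on h0 hS he hv
  by_cases hwS : w ∈ S
  · exact lt_of_le_of_lt (le_bigB hwS hw) h1
  · rw [hS w hwS]
    have h2 := bigB_nonneg f S σ
    linarith

include h0 hS in
lemma cut_chain {σ τ : Finset V} (he : eV f S σ ≠ 0) (he' : eV f S τ ≠ 0) :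
    σ ⊆ τ ∨ τ ⊆ σ := by
  by_contra hc
  push_neg at hc
  obtain ⟨v, hvσ, hvτ⟩ := Finset.not_subset.1 hc.1
  obtain ⟨w, hwτ, hwσ⟩ := Finset.not_subset.1 hc.2
  have h1 := cut_sep h0 hS he hvσ hwσ
  have h2 := cut_sep h0 hS he' hwτ hvτ
  linarith

end props

/-- The set of "cuts" (superlevel sets) of `f`. -/
noncomputable def cutsF (f : V → ℝ) (S : Finset V) : Finset (Finset V) :=
  S.powerset.filter (fun σ => eV f S σ ≠ 0)

lemma mem_cutsF {f : V → ℝ} {S : Finset V} (h0 : ∀ v, 0 ≤ f v)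
    (hS : ∀ v, v ∉ S → f v = 0) {σ : Finset V} :
    σ ∈ cutsF f S ↔ eV f S σ ≠ 0 := by
  unfold cutsF
  rw [Finset.mem_filter, Finset.mem_powerset]
  exact ⟨fun h => h.2, fun h => ⟨cut_subset h0 hS h, h⟩⟩

lemma cutsF_eq_empty {f : V → ℝ} {S : Finset V} (h : ∀ v, f v = 0) :
    cutsF f S = ∅ := by
  unfold cutsF
  rw [Finset.filter_eq_empty_iff]
  intro σ _ he
  obtain ⟨hne, hlt⟩ := eV_ne_zero_iff.1 he
  have h1 := bigB_nonneg f S σ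
  have h2 : σ.inf' hne f ≤ 0 := by
    have h3 := Finset.inf'_le f hne.choose_spec
    rw [h hne.choose] at h3
    exact h3
  linarith

end St18
namespace St18
open Finset
open scoped Classical

universe w
variable {V : Type w}

/-- top level set -/
noncomputable def sigma1 (f : V → ℝ) (S : Finset V) (M : ℝ) : Finset V :=
  S.filter (fun v => M ≤ f v)

/-- truncation -/
noncomputable def trunc (f : V → ℝ) (c : ℝ) : V → ℝ := fun v => min (f v) c

lemma bigB_fun_congr {f g : V → ℝ} {S σ : Finset V}
    (h : ∀ v ∈ S, v ∉ σ → f v = g v) : bigB f S σ = bigB g S σ := by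
  have key : ∀ (u w : V → ℝ), (∀ v ∈ S, v ∉ σ → u v = w v) → bigB u S σ ≤ bigB w S σ := by
    intro u w huw
    refine bigB_le (bigB_nonneg _ _ _) fun v hv hvs => ?_
    rw [huw v hv hvs]
    exact le_bigB hv hvs
  exact le_antisymm (key f g h) (key g f (fun v hv hvs => (h v hv hvs).symm))

lemma eV_congr' {f g : V → ℝ} {S σ : Finset V} (h : σ.Nonempty)
    (hA : σ.inf' h f = σ.inf' h g) (hB : bigB f S σ = bigB g S σ) :
    eV f S σ = eV g S σ := by
  unfold eV
  rw [dif_pos h, dif_pos h, hA, hB]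

section step
variable {f : V → ℝ} {S : Finset V} {M : ℝ}
variable (h0 : ∀ v, 0 ≤ f v) (hS : ∀ v, v ∉ S → f v = 0)
variable (hMmax : ∀ v, f v ≤ M) (hMpos : 0 < M) (hMmem : ∃ v, f v = M)

include hMmax in
lemma s1_val {v : V} (hv : v ∈ sigma1 f S M) : f v = M :=
  le_antisymm (hMmax v) (Finset.mem_filter.1 hv).2

include hS hMpos hMmem in
lemma s1_nonempty : (sigma1 f S M).Nonempty := by
  obtain ⟨v, hv⟩ := hMmem
  refine ⟨v, Finset.mem_filter.2 ⟨?_, le_of_eq hv.symm⟩⟩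
  by_contra hvS
  rw [hS v hvS] at hv
  linarith

include hMmax hMpos in
lemma M2_lt_M : bigB f S (sigma1 f S M) < M := by
  rcases bigB_mem (f := f) (S := S) (σ := sigma1 f S M) with h | ⟨v, hv, hvs, hveq⟩
  · rw [h]; exact hMpos
  · rw [← hveq]
    rcases lt_or_ge (f v) M with h | h
    · exact h
    · exact absurd (Finset.mem_filter.2 ⟨hv, h⟩) hvs

include hS hMmax hMpos hMmem in
lemma s1_inf : (sigma1 f S M).inf' (s1_nonempty hS hMpos hMmem) f = M := by
  apply le_antisymm
  · exact le_trans (Finset.inf'_le f (s1_nonempty hS hMpos hMmem).choose_spec)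
      (le_of_eq (s1_val hMmax (s1_nonempty hS hMpos hMmem).choose_spec))
  · exact Finset.le_inf' _ _ fun v hv => le_of_eq (s1_val hMmax hv).symm

include hS hMmax hMpos hMmem in
lemma s1_eV : eV f S (sigma1 f S M) = M - bigB f S (sigma1 f S M) := by
  unfold eV
  rw [dif_pos (s1_nonempty hS hMpos hMmem), s1_inf hS hMmax hMpos hMmem]
  exact max_eq_left (by linarith [M2_lt_M (f := f) (S := S) hMmax hMpos])

include hS hMmax hMpos hMmem in
lemma s1_cut : eV f S (sigma1 f S M) ≠ 0 := by
  rw [s1_eV hS hMmax hMpos hMmem]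
  have := M2_lt_M (f := f) (S := S) hMmax hMpos
  intro h; linarith

-- properties of f' := trunc f M₂ where M₂ := bigB f S (sigma1 f S M)
include h0 in
lemma trunc_nonneg {c : ℝ} (hc : 0 ≤ c) (v : V) : 0 ≤ trunc f c v :=
  le_min (h0 v) hc

include hS h0 in
lemma trunc_zero {c : ℝ} (hc : 0 ≤ c) {v : V} (hv : v ∉ S) : trunc f c v = 0 := by
  unfold trunc
  rw [hS v hv]
  exact min_eq_left hc

include hMmax hMpos in
lemma trunc_on_s1 {v : V} (hv : v ∈ sigma1 f S M) :
    trunc f (bigB f S (sigma1 f S M)) v = bigB f S (sigma1 f S M) := by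
  unfold trunc
  rw [s1_val hMmax hv]
  exact min_eq_right (le_of_lt (M2_lt_M hMmax hMpos))

include hS in
lemma f_le_M2_off_s1 {v : V} (hv : v ∉ sigma1 f S M) :
    f v ≤ bigB f S (sigma1 f S M) := by
  by_cases hvS : v ∈ S
  · exact le_bigB hvS hv
  · rw [hS v hvS]; exact bigB_nonneg _ _ _

include hS in
lemma trunc_off_s1 {v : V} (hv : v ∉ sigma1 f S M) :
    trunc f (bigB f S (sigma1 f S M)) v = f v :=
  min_eq_left (f_le_M2_off_s1 hS hv)

end step

end St18
namespace St18
open Finset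
open scoped Classical

universe w
variable {V : Type w}

section step2
variable {f : V → ℝ} {S : Finset V} {M : ℝ}
variable (h0 : ∀ v, 0 ≤ f v) (hS : ∀ v, v ∉ S → f v = 0)
variable (hMmax : ∀ v, f v ≤ M) (hMpos : 0 < M) (hMmem : ∃ v, f v = M)

include h0 hS hMmax hMpos in
lemma step_s1_subset_cut {σ : Finset V}
    (he : eV (trunc f (bigB f S (sigma1 f S M))) S σ ≠ 0) : sigma1 f S M ⊆ σ := by
  set M₂ := bigB f S (sigma1 f S M) with hM₂
  have h0' : ∀ v, 0 ≤ trunc f M₂ v := trunc_nonneg h0 (bigB_nonneg _ _ _)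
  have hS' : ∀ v, v ∉ S → trunc f M₂ v = 0 := fun v hv =>
    trunc_zero h0 hS (bigB_nonneg _ _ _) hv
  intro v hv
  by_contra hvσ
  obtain ⟨hne, -⟩ := eV_ne_zero_iff.1 he
  have hsep := cut_sep h0' hS' he hne.choose_spec hvσ
  have h1 : trunc f M₂ v = M₂ := trunc_on_s1 hMmax hMpos hv
  have h2 : trunc f M₂ hne.choose ≤ M₂ := min_le_right _ _
  rw [h1] at hsep
  linarith

include h0 hS hMmax hMpos in
lemma step_s1_not_cut :
    eV (trunc f (bigB f S (sigma1 f S M))) S (sigma1 f S M) = 0 := by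
  set M₂ := bigB f S (sigma1 f S M) with hM₂
  by_contra he
  obtain ⟨hne, hlt⟩ := eV_ne_zero_iff.1 he
  have h1 : (sigma1 f S M).inf' hne (trunc f M₂) ≤ M₂ := by
    refine le_trans (Finset.inf'_le _ hne.choose_spec) ?_
    rw [trunc_on_s1 hMmax hMpos hne.choose_spec]
  have h2 : bigB (trunc f M₂) S (sigma1 f S M) = M₂ := by
    rw [bigB_fun_congr (g := f) (fun v hv hvs => trunc_off_s1 hS hvs)]
  rw [h2] at hlt
  linarith

include hS in
lemma step_eV_eq {σ : Finset V} (hss : sigma1 f S M ⊂ σ) :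
    eV (trunc f (bigB f S (sigma1 f S M))) S σ = eV f S σ := by
  set M₂ := bigB f S (sigma1 f S M) with hM₂
  obtain ⟨w, hwσ, hwσ₁⟩ := Finset.exists_of_ssubset hss
  have hne : σ.Nonempty := ⟨w, hwσ⟩
  have hfw : f w ≤ M₂ := f_le_M2_off_s1 hS hwσ₁
  refine eV_congr' hne ?_ ?_
  · apply le_antisymm
    · obtain ⟨w₀, hw₀, heq⟩ := Finset.exists_mem_eq_inf' hne f
      rw [heq]
      exact le_trans (Finset.inf'_le _ hw₀) (min_le_left _ _)
    · refine Finset.le_inf' _ _ fun v hv => le_min (Finset.inf'_le f hv) ?_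
      exact le_trans (Finset.inf'_le f hwσ) hfw
  · exact bigB_fun_congr fun v hv hvσ =>
      trunc_off_s1 hS (fun hc => hvσ (hss.1 hc))

include h0 hS hMmax hMpos hMmem in
lemma step_cut_ssubset {σ : Finset V} (he : eV f S σ ≠ 0)
    (hne : σ ≠ sigma1 f S M) : sigma1 f S M ⊂ σ := by
  rcases cut_chain h0 hS he (s1_cut hS hMmax hMpos hMmem) with hsub | hsub
  · exfalso
    obtain ⟨hσne, -⟩ := eV_ne_zero_iff.1 he
    obtain ⟨w, hw, hwσ⟩ := Finset.exists_of_ssubset (Finset.ssubset_iff_subset_ne.2 ⟨hsub, hne⟩)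
    have hsep := cut_sep h0 hS he hσne.choose_spec hwσ
    have h1 : f w = M := s1_val hMmax hw
    have h2 : f hσne.choose = M := s1_val hMmax (hsub hσne.choose_spec)
    rw [h1, h2] at hsep
    linarith
  · exact Finset.ssubset_iff_subset_ne.2 ⟨hsub, Ne.symm hne⟩

include h0 hS hMmax hMpos hMmem in
lemma step_cuts :
    cutsF f S = insert (sigma1 f S M) (cutsF (trunc f (bigB f S (sigma1 f S M))) S) := by
  set M₂ := bigB f S (sigma1 f S M) with hM₂
  have h0' : ∀ v, 0 ≤ trunc f M₂ v := trunc_nonneg h0 (bigB_nonneg _ _ _)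
  have hS' : ∀ v, v ∉ S → trunc f M₂ v = 0 := fun v hv =>
    trunc_zero h0 hS (bigB_nonneg _ _ _) hv
  ext σ
  rw [Finset.mem_insert, mem_cutsF h0 hS, mem_cutsF h0' hS']
  constructor
  · intro he
    by_cases hσ : σ = sigma1 f S M
    · exact Or.inl hσ
    · right
      rw [step_eV_eq hS (step_cut_ssubset h0 hS hMmax hMpos hMmem he hσ)]
      exact he
  · rintro (rfl | he)
    · exact s1_cut hS hMmax hMpos hMmem
    · have hsub : sigma1 f S M ⊆ σ := step_s1_subset_cut h0 hS hMmax hMpos he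
      have hne : σ ≠ sigma1 f S M := by
        rintro rfl
        exact he (step_s1_not_cut h0 hS hMmax hMpos)
      rw [← step_eV_eq hS (Finset.ssubset_iff_subset_ne.2 ⟨hsub, Ne.symm hne⟩)]
      exact he

include h0 hS hMmax hMpos in
lemma step_eV_all {σ : Finset V}
    (he : eV (trunc f (bigB f S (sigma1 f S M))) S σ ≠ 0) :
    eV (trunc f (bigB f S (sigma1 f S M))) S σ = eV f S σ := by
  have hsub := step_s1_subset_cut h0 hS hMmax hMpos he
  have hne : σ ≠ sigma1 f S M := by
    rintro rfl
    exact he (step_s1_not_cut h0 hS hMmax hMpos)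
  exact step_eV_eq hS (Finset.ssubset_iff_subset_ne.2 ⟨hsub, Ne.symm hne⟩)

end step2

end St18
namespace St18
open Finset
open scoped Classical

universe w
variable {V : Type w}

lemma key_aux (S : Finset V) : ∀ (n : ℕ) (f : V → ℝ), (∀ v, 0 ≤ f v) →
    (∀ v, v ∉ S → f v = 0) → ((S.filter (fun v => f v ≠ 0)).image f).card ≤ n →
    ∀ v, (∑ σ ∈ cutsF f S, if v ∈ σ then eV f S σ else 0) = f v := by
  intro n
  induction n with
  | zero =>
    intro f h0 hS hcard v
    have hT : (S.filter (fun v => f v ≠ 0)).image f = ∅ :=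
      Finset.card_eq_zero.1 (Nat.le_zero.1 hcard)
    have hf : ∀ w, f w = 0 := by
      intro w
      by_contra hw
      have hwS : w ∈ S := by
        by_contra h; exact hw (hS w h)
      have : f w ∈ (S.filter (fun v => f v ≠ 0)).image f :=
        Finset.mem_image_of_mem f (Finset.mem_filter.2 ⟨hwS, hw⟩)
      rw [hT] at this
      exact absurd this (Finset.notMem_empty _)
    rw [cutsF_eq_empty hf, Finset.sum_empty, hf v]
  | succ n ih =>
    intro f h0 hS hcard v
    set T := (S.filter (fun v => f v ≠ 0)).image f with hT
    rcases Finset.eq_empty_or_nonempty T with hTe | hTne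
    · -- same as base case
      have hf : ∀ w, f w = 0 := by
        intro w
        by_contra hw
        have hwS : w ∈ S := by
          by_contra h; exact hw (hS w h)
        have : f w ∈ T := Finset.mem_image_of_mem f (Finset.mem_filter.2 ⟨hwS, hw⟩)
        rw [hTe] at this
        exact absurd this (Finset.notMem_empty _)
      rw [cutsF_eq_empty hf, Finset.sum_empty, hf v]
    · set M := T.max' hTne with hM
      have hMT : M ∈ T := T.max'_mem hTne
      obtain ⟨vM, hvM, hvMeq⟩ := Finset.mem_image.1 hMT
      have hMmem : ∃ w, f w = M := ⟨vM, hvMeq⟩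
      have hMpos : 0 < M := by
        rcases lt_or_eq_of_le (h0 vM) with h | h
        · rw [← hvMeq]; exact h
        · exact absurd h.symm (Finset.mem_filter.1 hvM).2
      have hMmax : ∀ w, f w ≤ M := by
        intro w
        by_cases hw : f w = 0
        · rw [hw]; exact le_of_lt hMpos
        · have hwS : w ∈ S := by
            by_contra h; exact hw (hS w h)
          exact T.le_max' _ (Finset.mem_image_of_mem f (Finset.mem_filter.2 ⟨hwS, hw⟩))
      set M₂ := bigB f S (sigma1 f S M) with hM₂
      set f' := trunc f M₂ with hf'
      have hM₂0 : 0 ≤ M₂ := bigB_nonneg _ _ _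
      have h0' : ∀ w, 0 ≤ f' w := trunc_nonneg h0 hM₂0
      have hS' : ∀ w, w ∉ S → f' w = 0 := fun w hw => trunc_zero h0 hS hM₂0 hw
      have hM₂M : M₂ < M := M2_lt_M hMmax hMpos
      -- value set of f' shrinks
      have hcard' : ((S.filter (fun v => f' v ≠ 0)).image f').card ≤ n := by
        have hsub : (S.filter (fun v => f' v ≠ 0)).image f' ⊆ T.erase M := by
          intro x hx
          obtain ⟨w, hw, hweq⟩ := Finset.mem_image.1 hx
          obtain ⟨hwS, hwne⟩ := Finset.mem_filter.1 hw
          rcases le_or_gt (f w) M₂ with hle | hlt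
          · have hfw : f' w = f w := min_eq_left hle
            rw [hfw] at hweq hwne
            refine Finset.mem_erase.2 ⟨?_, ?_⟩
            · rw [← hweq]; intro hc; rw [hc] at hle; linarith
            · rw [← hweq]
              exact Finset.mem_image_of_mem f (Finset.mem_filter.2 ⟨hwS, hwne⟩)
          · have hfw : f' w = M₂ := min_eq_right (le_of_lt hlt)
            rw [hfw] at hweq hwne
            rcases bigB_mem (f := f) (S := S) (σ := sigma1 f S M) with hz | ⟨y, hyS, hyσ, hyeq⟩
            · rw [← hM₂] at hz; exact absurd hz hwne
            · refine Finset.mem_erase.2 ⟨?_, ?_⟩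
              · rw [← hweq]; intro hc; linarith [hM₂M]
              · rw [← hweq, hM₂, ← hyeq]
                refine Finset.mem_image_of_mem f (Finset.mem_filter.2 ⟨hyS, ?_⟩)
                rw [hyeq]; exact hwne
        calc ((S.filter (fun v => f' v ≠ 0)).image f').card
            ≤ (T.erase M).card := Finset.card_le_card hsub
          _ = T.card - 1 := Finset.card_erase_of_mem hMT
          _ ≤ n := by omega
      have ihf' := ih f' h0' hS' hcard'
      have hnotmem : sigma1 f S M ∉ cutsF f' S := by
        rw [mem_cutsF h0' hS']
        intro hc
        exact hc (step_s1_not_cut h0 hS hMmax hMpos)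
      rw [step_cuts h0 hS hMmax hMpos hMmem, Finset.sum_insert hnotmem]
      have hcongr : ∀ σ ∈ cutsF f' S,
          (if v ∈ σ then eV f S σ else 0) = (if v ∈ σ then eV f' S σ else 0) := by
        intro σ hσ
        have he' := (mem_cutsF h0' hS').1 hσ
        rw [step_eV_all h0 hS hMmax hMpos he']
      rw [Finset.sum_congr rfl hcongr, ihf' v]
      by_cases hv : v ∈ sigma1 f S M
      · rw [if_pos hv, s1_eV hS hMmax hMpos hMmem, s1_val hMmax hv, hf', hM₂,
          trunc_on_s1 hMmax hMpos hv]
        ring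
      · rw [if_neg hv, hf', hM₂, trunc_off_s1 hS hv]
        ring

lemma key {f : V → ℝ} {S : Finset V} (h0 : ∀ v, 0 ≤ f v) (hS : ∀ v, v ∉ S → f v = 0)
    (v : V) : (∑ σ ∈ cutsF f S, if v ∈ σ then eV f S σ else 0) = f v :=
  key_aux S _ f h0 hS (le_refl _) v

lemma key_sum {f : V → ℝ} {S : Finset V} (h0 : ∀ v, 0 ≤ f v)
    (hS : ∀ v, v ∉ S → f v = 0) :
    ∑ σ ∈ cutsF f S, (σ.card : ℝ) * eV f S σ = ∑ v ∈ S, f v := by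
  have h1 : ∀ σ ∈ cutsF f S,
      (σ.card : ℝ) * eV f S σ = ∑ v ∈ S, if v ∈ σ then eV f S σ else 0 := by
    intro σ hσ
    have hsub : σ ⊆ S := Finset.mem_powerset.1 (Finset.mem_filter.1 hσ).1
    rw [Finset.sum_ite_mem, Finset.inter_eq_right.2 hsub, Finset.sum_const,
      nsmul_eq_mul]
  rw [Finset.sum_congr rfl h1, Finset.sum_comm]
  exact Finset.sum_congr rfl fun v _ => key h0 hS v

end St18
namespace St18
open Finset
open scoped Classical

universe w
variable {V : Type w}

lemma unique_rep_aux (S : Finset V) : ∀ (n : ℕ) (f : V → ℝ) (c : Finset (Finset V))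
    (u : Finset V → ℝ), (∀ v, 0 ≤ f v) → (∀ v, v ∉ S → f v = 0) →
    (∀ σ ∈ c, ∀ τ ∈ c, σ ⊆ τ ∨ τ ⊆ σ) → (∀ σ ∈ c, σ.Nonempty) →
    (∀ σ ∈ c, 0 < u σ) →
    (∀ v, f v = ∑ σ ∈ c, if v ∈ σ then u σ else 0) → c.card ≤ n →
    cutsF f S = c ∧ ∀ σ ∈ c, eV f S σ = u σ := by
  intro n
  induction n with
  | zero =>
    intro f c u h0 hS hchain hne hu hrep hcard
    have hc : c = ∅ := Finset.card_eq_zero.1 (Nat.le_zero.1 hcard)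
    subst hc
    have hf : ∀ v, f v = 0 := by
      intro v; rw [hrep v, Finset.sum_empty]
    exact ⟨cutsF_eq_empty hf, by simp⟩
  | succ n ih =>
    intro f c u h0 hS hchain hne hu hrep hcard
    rcases Finset.eq_empty_or_nonempty c with hc | hcne
    · subst hc
      have hf : ∀ v, f v = 0 := by
        intro v; rw [hrep v, Finset.sum_empty]
      exact ⟨cutsF_eq_empty hf, by simp⟩
    · -- least element of the chain
      obtain ⟨σs, hσsc, hσsmin⟩ := Finset.exists_min_image c Finset.card hcne
      have hleast : ∀ σ ∈ c, σs ⊆ σ := by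
        intro σ hσ
        rcases hchain σs hσsc σ hσ with h | h
        · exact h
        · rw [Finset.eq_of_subset_of_card_le h (hσsmin σ hσ)]
      set Mval := ∑ σ ∈ c, u σ with hMval
      have hMpos : 0 < Mval := Finset.sum_pos hu hcne
      have hfs : ∀ v ∈ σs, f v = Mval := by
        intro v hv
        rw [hrep v]
        exact Finset.sum_congr rfl fun σ hσ => if_pos (hleast σ hσ hv)
      have herase : ∑ σ ∈ c.erase σs, u σ = Mval - u σs := by
        have := Finset.sum_erase_add c u hσsc
        linarith
      have hub : ∀ v, v ∉ σs → f v ≤ Mval - u σs := by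
        intro v hv
        rw [hrep v, ← Finset.sum_erase_add c _ hσsc, if_neg hv, add_zero, ← herase]
        refine Finset.sum_le_sum fun σ hσ => ?_
        split
        · exact le_refl _
        · exact le_of_lt (hu σ (Finset.mem_of_mem_erase hσ))
      have hM2nonneg : (0:ℝ) ≤ Mval - u σs := by
        rw [← herase]
        exact Finset.sum_nonneg fun σ hσ => le_of_lt (hu σ (Finset.mem_of_mem_erase hσ))
      have hMmax : ∀ v, f v ≤ Mval := by
        intro v
        by_cases hv : v ∈ σs
        · exact le_of_eq (hfs v hv)
        · linarith [hub v hv, hu σs hσsc]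
      have hMmem : ∃ v, f v = Mval := by
        obtain ⟨v, hv⟩ := hne σs hσsc
        exact ⟨v, hfs v hv⟩
      have hs1 : sigma1 f S Mval = σs := by
        ext v
        unfold sigma1
        rw [Finset.mem_filter]
        constructor
        · rintro ⟨hvS, hvM⟩
          by_contra hv
          linarith [hub v hv, hu σs hσsc]
        · intro hv
          refine ⟨?_, le_of_eq (hfs v hv).symm⟩
          by_contra hvS
          have := hS v hvS
          rw [hfs v hv] at this
          linarith
      have hM2 : bigB f S (sigma1 f S Mval) = Mval - u σs := by
        rw [hs1]
        apply le_antisymm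
        · exact bigB_le hM2nonneg fun v hv hvs => hub v hvs
        · rcases Finset.eq_empty_or_nonempty (c.erase σs) with hce | hcene
          · rw [← herase, hce, Finset.sum_empty]
            exact bigB_nonneg _ _ _
          · obtain ⟨σ₂, hσ₂c, hσ₂min⟩ := Finset.exists_min_image (c.erase σs)
              Finset.card hcene
            have hσ₂c' : σ₂ ∈ c := Finset.mem_of_mem_erase hσ₂c
            have hleast₂ : ∀ σ ∈ c.erase σs, σ₂ ⊆ σ := by
              intro σ hσ
              rcases hchain σ₂ hσ₂c' σ (Finset.mem_of_mem_erase hσ) with h | h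
              · exact h
              · rw [Finset.eq_of_subset_of_card_le h (hσ₂min σ hσ)]
            have hss : σs ⊂ σ₂ := Finset.ssubset_iff_subset_ne.2
              ⟨hleast σ₂ hσ₂c', Ne.symm (Finset.ne_of_mem_erase hσ₂c)⟩
            obtain ⟨w, hwσ₂, hwσs⟩ := Finset.exists_of_ssubset hss
            have hfw : f w = Mval - u σs := by
              rw [hrep w, ← Finset.sum_erase_add c _ hσsc, if_neg hwσs, add_zero,
                ← herase]
              exact Finset.sum_congr rfl fun σ hσ => if_pos (hleast₂ σ hσ hwσ₂)
            rw [← hfw]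
            refine le_bigB ?_ hwσs
            by_contra hwS
            have h1 := hS w hwS
            rw [hfw] at h1
            have h2 : (0:ℝ) < Mval - u σs := by
              rw [← herase]
              exact Finset.sum_pos (fun σ hσ => hu σ (Finset.mem_of_mem_erase hσ)) hcene
            linarith
      -- the truncated function represents the erased chain
      set f' := trunc f (bigB f S (sigma1 f S Mval)) with hf'
      have h0' : ∀ v, 0 ≤ f' v := trunc_nonneg h0 (bigB_nonneg _ _ _)
      have hS' : ∀ v, v ∉ S → f' v = 0 := fun v hv =>
        trunc_zero h0 hS (bigB_nonneg _ _ _) hv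
      have hrep' : ∀ v, f' v = ∑ σ ∈ c.erase σs, if v ∈ σ then u σ else 0 := by
        intro v
        by_cases hv : v ∈ σs
        · have h1 : f' v = Mval - u σs := by
            rw [hf', hM2]
            unfold trunc
            rw [hfs v hv]
            exact min_eq_right (by linarith [hu σs hσsc])
          rw [h1, ← herase]
          refine (Finset.sum_congr rfl fun σ hσ => if_pos ?_).symm
          have hss : σs ⊆ σ := hleast σ (Finset.mem_of_mem_erase hσ)
          exact hss hv
        · have h1 : f' v = f v := by
            rw [hf', hM2]
            exact min_eq_left (hub v hv)
          rw [h1, hrep v, ← Finset.sum_erase_add c _ hσsc, if_neg hv, add_zero]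
      have hcard' : (c.erase σs).card ≤ n := by
        rw [Finset.card_erase_of_mem hσsc]
        omega
      obtain ⟨ihc, ihe⟩ := ih f' (c.erase σs) u h0' hS'
        (fun σ hσ τ hτ => hchain σ (Finset.mem_of_mem_erase hσ) τ (Finset.mem_of_mem_erase hτ))
        (fun σ hσ => hne σ (Finset.mem_of_mem_erase hσ))
        (fun σ hσ => hu σ (Finset.mem_of_mem_erase hσ)) hrep' hcard'
      constructor
      · rw [step_cuts h0 hS hMmax hMpos hMmem, ← hf', ihc, hs1,
          Finset.insert_erase hσsc]
      · intro σ hσ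
        by_cases hσs : σ = σs
        · subst hσs
          have h3 : eV f S σ = eV f S (sigma1 f S Mval) := by rw [hs1]
          rw [h3, s1_eV hS hMmax hMpos hMmem, hM2]
          ring
        · have hσe : σ ∈ c.erase σs := Finset.mem_erase.2 ⟨hσs, hσ⟩
          have he' : eV f' S σ ≠ 0 := by
            rw [← ihc] at hσe
            exact (mem_cutsF h0' hS').1 hσe
          rw [← step_eV_all h0 hS hMmax hMpos (by rw [← hf']; exact he'), ← hf']
          exact ihe σ hσe

lemma unique_rep {f : V → ℝ} {S : Finset V} {c : Finset (Finset V)}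
    {u : Finset V → ℝ} (h0 : ∀ v, 0 ≤ f v) (hS : ∀ v, v ∉ S → f v = 0)
    (hchain : ∀ σ ∈ c, ∀ τ ∈ c, σ ⊆ τ ∨ τ ⊆ σ) (hne : ∀ σ ∈ c, σ.Nonempty)
    (hu : ∀ σ ∈ c, 0 < u σ)
    (hrep : ∀ v, f v = ∑ σ ∈ c, if v ∈ σ then u σ else 0) :
    cutsF f S = c ∧ ∀ σ ∈ c, eV f S σ = u σ :=
  unique_rep_aux S c.card f c u h0 hS hchain hne hu hrep (le_refl _)

end St18
namespace St18
open Finset AbsSimplicialComplex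
open scoped Classical

universe w
variable {V : Type w}

/-- The subcomplex of the barycentric subdivision spanned by faces of dimension `≥ k - 1`. -/
def bigChains (X : AbsSimplicialComplex V) (k : ℕ) : AbsSimplicialComplex (Finset V) where
  faces := {c | c.Nonempty ∧ (∀ σ ∈ c, σ ∈ X.faces ∧ k ≤ σ.card) ∧
    ∀ σ ∈ c, ∀ τ ∈ c, σ ⊆ τ ∨ τ ⊆ σ}
  nonempty_of_mem h := h.1
  down_closed := by
    rintro c d ⟨-, hmem, hchain⟩ hdc hdne
    exact ⟨hdne, fun σ hσ => hmem σ (hdc hσ),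
      fun σ hσ τ hτ => hchain σ (hdc hσ) τ (hdc hτ)⟩

variable {X : AbsSimplicialComplex V} {k : ℕ}

lemma supp_props (q : geomReal (bigChains X k)) :
    (∀ σ ∈ suppF q, σ ∈ X.faces ∧ k ≤ σ.card) ∧
    (∀ σ ∈ suppF q, ∀ τ ∈ suppF q, σ ⊆ τ ∨ τ ⊆ σ) := by
  have h1 := (face_spec q).1
  have h2 := suppF_subset_face q
  exact ⟨fun σ hσ => h1.2.1 σ (h2 hσ), fun σ hσ τ hτ => h1.2.2 σ (h2 hσ) τ (h2 hτ)⟩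

lemma chain_max {c : Finset (Finset V)} (hc : c.Nonempty)
    (hchain : ∀ σ ∈ c, ∀ τ ∈ c, σ ⊆ τ ∨ τ ⊆ σ) : ∃ τ ∈ c, ∀ σ ∈ c, σ ⊆ τ := by
  obtain ⟨τ, hτc, hτmax⟩ := Finset.exists_max_image c Finset.card hc
  refine ⟨τ, hτc, fun σ hσ => ?_⟩
  rcases hchain σ hσ τ hτc with h | h
  · exact h
  · rw [Finset.eq_of_subset_of_card_le h (hτmax σ hσ)]

/-- The top (largest) simplex in the support of `q`. -/
noncomputable def topF (q : geomReal (bigChains X k)) : Finset V :=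
  (chain_max (suppF_nonempty q) (supp_props q).2).choose

lemma topF_mem (q : geomReal (bigChains X k)) : topF q ∈ suppF q :=
  (chain_max (suppF_nonempty q) (supp_props q).2).choose_spec.1

lemma topF_max (q : geomReal (bigChains X k)) : ∀ σ ∈ suppF q, σ ⊆ topF q :=
  (chain_max (suppF_nonempty q) (supp_props q).2).choose_spec.2

/-- The affine map from the realization of the chain complex back to `|X|`. -/
noncomputable def Fraw (q : geomReal (bigChains X k)) : V → ℝ :=
  fun v => ∑ σ ∈ suppF q, q.1 σ * (if v ∈ σ then ((σ.card : ℝ))⁻¹ else 0)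

lemma Fraw_nonneg (q : geomReal (bigChains X k)) (v : V) : 0 ≤ Fraw q v :=
  Finset.sum_nonneg fun σ _ => mul_nonneg (pt_nonneg q σ)
    (by split <;> positivity)

lemma Fraw_eq_sum {q : geomReal (bigChains X k)} {D : Finset (Finset V)}
    (hD : suppF q ⊆ D) (v : V) :
    Fraw q v = ∑ σ ∈ D, q.1 σ * (if v ∈ σ then ((σ.card : ℝ))⁻¹ else 0) := by
  refine Finset.sum_subset hD fun σ _ hσ => ?_
  have : q.1 σ = 0 := by
    by_contra h; exact hσ (mem_suppF.2 h)
  rw [this, zero_mul]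

lemma Fraw_zero_off_top {q : geomReal (bigChains X k)} {v : V} (hv : v ∉ topF q) :
    Fraw q v = 0 := by
  refine Finset.sum_eq_zero fun σ hσ => ?_
  rw [if_neg (fun hc => hv (topF_max q σ hσ hc)), mul_zero]

lemma Fraw_pos_on_top {q : geomReal (bigChains X k)} {v : V} (hv : v ∈ topF q) :
    0 < Fraw q v := by
  have hτ := topF_mem q
  have hqτ : 0 < q.1 (topF q) :=
    lt_of_le_of_ne (pt_nonneg q _) (Ne.symm (mem_suppF.1 hτ))
  have hcard : 0 < ((topF q).card : ℝ) := by
    have := ((supp_props q).1 (topF q) hτ).1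
    have hne := X.nonempty_of_mem this
    exact_mod_cast Finset.card_pos.2 hne
  have hterm : 0 < q.1 (topF q) * (if v ∈ topF q then (((topF q).card : ℝ))⁻¹ else 0) := by
    rw [if_pos hv]; positivity
  refine lt_of_lt_of_le hterm ?_
  have hsum := Finset.single_le_sum
    (f := fun σ : Finset V => q.1 σ * (if v ∈ σ then ((σ.card : ℝ))⁻¹ else 0))
    (fun σ _ => mul_nonneg (pt_nonneg q σ) (by split <;> positivity)) hτ
  exact hsum

lemma Fraw_sum_top (q : geomReal (bigChains X k)) : ∑ v ∈ topF q, Fraw q v = 1 := by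
  unfold Fraw
  rw [Finset.sum_comm]
  have h1 : ∀ σ ∈ suppF q,
      (∑ v ∈ topF q, q.1 σ * (if v ∈ σ then ((σ.card : ℝ))⁻¹ else 0)) = q.1 σ := by
    intro σ hσ
    rw [← Finset.mul_sum, Finset.sum_ite_mem,
      Finset.inter_eq_right.2 (topF_max q σ hσ), Finset.sum_const, nsmul_eq_mul,
      mul_inv_cancel₀, mul_one]
    have hne := X.nonempty_of_mem ((supp_props q).1 σ hσ).1
    exact Nat.cast_ne_zero.2 (Finset.card_ne_zero.2 hne)
  rw [Finset.sum_congr rfl h1]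
  exact sum_suppF q

/-- `F` as a map into `|X|`. -/
noncomputable def Fgeom (q : geomReal (bigChains X k)) : geomReal X :=
  ⟨Fraw q, topF q, ((supp_props q).1 _ (topF_mem q)).1,
    fun v hv => Fraw_zero_off_top hv, Fraw_nonneg q, Fraw_sum_top q⟩

lemma suppF_Fgeom (q : geomReal (bigChains X k)) : suppF (Fgeom q) = topF q := by
  ext v
  rw [mem_suppF]
  constructor
  · intro h
    by_contra hv
    exact h (Fraw_zero_off_top hv)
  · intro hv
    exact ne_of_gt (Fraw_pos_on_top hv)

lemma card_suppF_Fgeom (q : geomReal (bigChains X k)) : k ≤ (suppF (Fgeom q)).card := by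
  rw [suppF_Fgeom]
  exact ((supp_props q).1 _ (topF_mem q)).2

lemma ptSupport_eq {Z : AbsSimplicialComplex V} (p : geomReal Z) :
    ptSupport p = ↑(suppF p) := by
  ext v
  simp only [ptSupport, Set.mem_setOf_eq, Finset.coe_filter, mem_suppF]
  exact ⟨fun h => mem_suppF.2 h, fun h => mem_suppF.1 h⟩

lemma ncard_ptSupport {Z : AbsSimplicialComplex V} (p : geomReal Z) :
    (ptSupport p).ncard = (suppF p).card := by
  rw [ptSupport_eq, Set.ncard_coe_finset]

end St18
namespace St18
open Finset AbsSimplicialComplex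
open scoped Classical

universe w
variable {V : Type w} {X : AbsSimplicialComplex V} {k : ℕ}

lemma hSp {Z : AbsSimplicialComplex V} (p : geomReal Z) :
    ∀ v, v ∉ suppF p → p.1 v = 0 := by
  intro v hv
  by_contra h
  exact hv (mem_suppF.2 h)

lemma supp_cut {Z : AbsSimplicialComplex V} (p : geomReal Z) :
    eV p.1 (suppF p) (suppF p) ≠ 0 := by
  refine eV_ne_zero_iff.2 ⟨suppF_nonempty p, ?_⟩
  have hB : bigB p.1 (suppF p) (suppF p) = 0 := by
    unfold bigB
    rw [dif_neg]
    simp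
  rw [hB]
  have h1 : ∀ v ∈ suppF p, 0 < p.1 v := fun v hv =>
    lt_of_le_of_ne (pt_nonneg p v) (Ne.symm (mem_suppF.1 hv))
  obtain ⟨v, hv, hveq⟩ := Finset.exists_mem_eq_inf' (suppF_nonempty p) p.1
  rw [hveq]
  exact h1 v hv

/-- numerator of the retraction coordinates -/
noncomputable def Gnum (k : ℕ) (p : geomReal X) (σ : Finset V) : ℝ :=
  if k ≤ σ.card then (σ.card : ℝ) * eV p.1 (suppF p) σ else 0

/-- normalizing mass -/
noncomputable def mG (k : ℕ) (p : geomReal X) : ℝ :=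
  ∑ σ ∈ cutsF p.1 (suppF p), Gnum k p σ

lemma Gnum_nonneg (p : geomReal X) (σ : Finset V) : 0 ≤ Gnum k p σ := by
  unfold Gnum; split
  · exact mul_nonneg (by positivity) (eV_nonneg _ _ _)
  · exact le_refl 0

lemma Gnum_eq_zero_of_not_cut {p : geomReal X} {σ : Finset V}
    (h : σ ∉ cutsF p.1 (suppF p)) : Gnum k p σ = 0 := by
  unfold Gnum
  split
  · rw [not_ne_iff.1 fun hc => h ((mem_cutsF (pt_nonneg p) (hSp p)).2 hc), mul_zero]
  · rfl

lemma mG_pos (p : geomReal X) (hp : k ≤ (suppF p).card) : 0 < mG k p := by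
  have hmem : suppF p ∈ cutsF p.1 (suppF p) :=
    (mem_cutsF (pt_nonneg p) (hSp p)).2 (supp_cut p)
  have hterm : 0 < Gnum k p (suppF p) := by
    unfold Gnum
    rw [if_pos hp]
    have h1 : (0:ℝ) < ((suppF p).card : ℝ) := by
      exact_mod_cast Finset.card_pos.2 (suppF_nonempty p)
    have h2 := lt_of_le_of_ne (eV_nonneg p.1 (suppF p) (suppF p)) (Ne.symm (supp_cut p))
    positivity
  exact lt_of_lt_of_le hterm (Finset.single_le_sum (fun σ _ => Gnum_nonneg p σ) hmem)

/-- the chain of big cuts -/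
noncomputable def cset (k : ℕ) (p : geomReal X) : Finset (Finset V) :=
  (cutsF p.1 (suppF p)).filter (fun σ => k ≤ σ.card)

lemma cset_face (p : geomReal X) (hp : k ≤ (suppF p).card) :
    cset k p ∈ (bigChains X k).faces := by
  have hcut : ∀ σ ∈ cset k p, eV p.1 (suppF p) σ ≠ 0 := by
    intro σ hσ
    exact (mem_cutsF (pt_nonneg p) (hSp p)).1 (Finset.mem_filter.1 hσ).1
  refine ⟨?_, ?_, ?_⟩
  · refine ⟨suppF p, Finset.mem_filter.2 ⟨?_, hp⟩⟩
    exact (mem_cutsF (pt_nonneg p) (hSp p)).2 (supp_cut p)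
  · intro σ hσ
    refine ⟨?_, (Finset.mem_filter.1 hσ).2⟩
    have hsub : σ ⊆ suppF p := cut_subset (pt_nonneg p) (hSp p) (hcut σ hσ)
    have hne : σ.Nonempty := (eV_ne_zero_iff.1 (hcut σ hσ)).choose
    exact X.down_closed (face_spec p).1 (hsub.trans (suppF_subset_face p)) hne
  · intro σ hσ τ hτ
    exact cut_chain (pt_nonneg p) (hSp p) (hcut σ hσ) (hcut τ hτ)

lemma mG_eq_cset (p : geomReal X) : mG k p = ∑ σ ∈ cset k p, Gnum k p σ := by
  unfold mG cset
  rw [Finset.sum_filter_of_ne]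
  intro σ hσ hne
  unfold Gnum at hne
  by_contra h
  rw [if_neg h] at hne
  exact hne rfl

/-- The retraction map into the chain complex. -/
noncomputable def Ggeom (p : geomReal X) (hp : k ≤ (suppF p).card) :
    geomReal (bigChains X k) := by
  refine ⟨fun σ => Gnum k p σ / mG k p, cset k p, cset_face p hp, ?_, ?_, ?_⟩
  · intro σ hσ
    have : Gnum k p σ = 0 := by
      by_cases hc : σ ∈ cutsF p.1 (suppF p)
      · unfold Gnum
        rw [if_neg]
        intro hk2
        exact hσ (Finset.mem_filter.2 ⟨hc, hk2⟩)
      · exact Gnum_eq_zero_of_not_cut hc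
    show Gnum k p σ / mG k p = 0
    rw [this, zero_div]
  · intro σ
    exact div_nonneg (Gnum_nonneg p σ) (le_of_lt (mG_pos p hp))
  · rw [← Finset.sum_div, ← mG_eq_cset, div_self (ne_of_gt (mG_pos p hp))]

lemma Ggeom_supp {p : geomReal X} {hp : k ≤ (suppF p).card} {v : V}
    (h : Fraw (Ggeom p hp) v ≠ 0) : p.1 v ≠ 0 := by
  intro hpv
  apply h
  refine Finset.sum_eq_zero fun σ hσ => ?_
  have hσc : Gnum k p σ ≠ 0 := by
    have h1 : (Ggeom p hp).1 σ ≠ 0 := mem_suppF.1 hσ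
    intro hc
    apply h1
    show Gnum k p σ / mG k p = 0
    rw [hc, zero_div]
  have hcut : σ ∈ cutsF p.1 (suppF p) := by
    by_contra hc
    exact hσc (Gnum_eq_zero_of_not_cut hc)
  have hsub : σ ⊆ suppF p :=
    cut_subset (pt_nonneg p) (hSp p) ((mem_cutsF (pt_nonneg p) (hSp p)).1 hcut)
  have hv : v ∉ σ := fun hc => (mem_suppF.1 (hsub hc)) hpv
  rw [if_neg hv, mul_zero]

lemma GF_id (hk : 1 ≤ k) (q : geomReal (bigChains X k)) :
    Ggeom (Fgeom q) (card_suppF_Fgeom q) = q := by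
  set p := Fgeom q with hpdef
  have hS0 : suppF p = topF q := suppF_Fgeom q
  -- the representation of p via the support chain of q
  have hu : ∀ σ ∈ suppF q, 0 < q.1 σ * ((σ.card : ℝ))⁻¹ := by
    intro σ hσ
    have h1 : 0 < q.1 σ := lt_of_le_of_ne (pt_nonneg q σ) (Ne.symm (mem_suppF.1 hσ))
    have h2 : (0:ℝ) < (σ.card : ℝ) := by
      exact_mod_cast Finset.card_pos.2 (X.nonempty_of_mem ((supp_props q).1 σ hσ).1)
    positivity
  have hrep : ∀ v, p.1 v = ∑ σ ∈ suppF q,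
      if v ∈ σ then q.1 σ * ((σ.card : ℝ))⁻¹ else 0 := by
    intro v
    show Fraw q v = _
    unfold Fraw
    exact Finset.sum_congr rfl fun σ _ => by rw [mul_ite, mul_zero]
  obtain ⟨hcuts, heV⟩ := unique_rep (pt_nonneg p) (hSp p) (supp_props q).2
    (fun σ hσ => X.nonempty_of_mem ((supp_props q).1 σ hσ).1) hu hrep
  have hcard_ne : ∀ σ ∈ suppF q, ((σ.card : ℝ)) ≠ 0 := fun σ hσ =>
    Nat.cast_ne_zero.2 (Finset.card_ne_zero.2
      (X.nonempty_of_mem ((supp_props q).1 σ hσ).1))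
  have hGnum : ∀ σ ∈ suppF q, Gnum k p σ = q.1 σ := by
    intro σ hσ
    unfold Gnum
    rw [if_pos ((supp_props q).1 σ hσ).2, heV σ hσ]
    have := hcard_ne σ hσ
    field_simp
  have hm : mG k p = 1 := by
    unfold mG
    rw [hcuts, Finset.sum_congr rfl hGnum]
    exact sum_suppF q
  apply Subtype.ext
  funext σ
  show Gnum k p σ / mG k p = q.1 σ
  rw [hm, div_one]
  by_cases hσ : σ ∈ suppF q
  · exact hGnum σ hσ
  · rw [Gnum_eq_zero_of_not_cut (by rw [hcuts]; exact hσ)]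
    by_contra h
    exact hσ (mem_suppF.2 fun hc => h hc.symm)

end St18
namespace St18
open Finset AbsSimplicialComplex Filter
open scoped Classical Topology

universe w
variable {V : Type w} {X : AbsSimplicialComplex V} {k : ℕ}

lemma continuousAt_Fraw (v : V) (q₀ : geomReal (bigChains X k)) :
    ContinuousAt (fun q : geomReal (bigChains X k) => Fraw q v) q₀ := by
  classical
  set C₀ := suppF q₀ with hC₀
  set c : Finset V → ℝ := fun σ => if v ∈ σ then ((σ.card : ℝ))⁻¹ else 0 with hc
  have hc0 : ∀ σ, 0 ≤ c σ := by
    intro σ; rw [hc]; dsimp only; split <;> positivity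
  have hc1 : ∀ σ : Finset V, σ.Nonempty → c σ ≤ 1 := by
    intro σ hσ; rw [hc]; dsimp only
    split
    · apply inv_le_one_of_one_le₀
      exact_mod_cast Finset.card_pos.2 hσ
    · norm_num
  set L : geomReal (bigChains X k) → ℝ := fun q => ∑ σ ∈ C₀, q.1 σ * c σ with hLdef
  have hL : Continuous L := by
    apply continuous_finset_sum
    intro σ _
    exact (continuous_eval σ).mul continuous_const
  set tY : geomReal (bigChains X k) → ℝ := fun q => 1 - ∑ σ ∈ C₀, q.1 σ with htYdef
  have htY : Continuous tY := by
    apply Continuous.sub continuous_const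
    exact continuous_finset_sum _ fun σ _ => continuous_eval σ
  have hFr : ∀ q : geomReal (bigChains X k),
      Fraw q v = ∑ σ ∈ suppF q ∪ C₀, q.1 σ * c σ :=
    fun q => Fraw_eq_sum Finset.subset_union_left v
  have hlow : ∀ q, L q ≤ Fraw q v := by
    intro q
    rw [hFr q]
    exact Finset.sum_le_sum_of_subset_of_nonneg Finset.subset_union_right
      (fun σ _ _ => mul_nonneg (pt_nonneg q σ) (hc0 σ))
  have hup : ∀ q, Fraw q v ≤ L q + tY q := by
    intro q
    rw [hFr q]
    have hsub : C₀ ⊆ suppF q ∪ C₀ := Finset.subset_union_right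
    rw [← Finset.sum_sdiff hsub]
    have h1 : ∑ σ ∈ (suppF q ∪ C₀) \ C₀, q.1 σ * c σ ≤
        ∑ σ ∈ (suppF q ∪ C₀) \ C₀, q.1 σ := by
      refine Finset.sum_le_sum fun σ hσ => ?_
      have hσs : σ ∈ suppF q := by
        rcases Finset.mem_union.1 (Finset.mem_sdiff.1 hσ).1 with h | h
        · exact h
        · exact absurd h (Finset.mem_sdiff.1 hσ).2
      have hσne : σ.Nonempty := X.nonempty_of_mem ((supp_props q).1 σ hσs).1
      exact mul_le_of_le_one_right (pt_nonneg q σ) (hc1 σ hσne)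
    have h2 : ∑ σ ∈ (suppF q ∪ C₀) \ C₀, q.1 σ ≤ tY q := by
      have h3 := sum_le_one q (suppF q ∪ C₀)
      rw [← Finset.sum_sdiff hsub] at h3
      rw [htYdef]
      dsimp only
      linarith
    linarith [h1, h2]
  have hL0 : L q₀ = Fraw q₀ v := by
    rw [hLdef]
    exact (Fraw_eq_sum (le_refl _) v).symm
  have htY0 : tY q₀ = 0 := by
    rw [htYdef]
    dsimp only
    rw [hC₀, sum_suppF q₀]
    ring
  have main : Tendsto (fun q : geomReal (bigChains X k) => Fraw q v) (𝓝 q₀)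
      (𝓝 (Fraw q₀ v)) := by
    refine tendsto_of_tendsto_of_tendsto_of_le_of_le
      (g := L) (h := fun q => L q + tY q) ?_ ?_ hlow hup
    · rw [← hL0]; exact hL.continuousAt
    · have h5 := (hL.add htY).continuousAt (x := q₀)
      have h6 : L q₀ + tY q₀ = Fraw q₀ v := by rw [hL0, htY0]; ring
      rw [← h6]
      exact h5
  exact main

lemma continuous_Fgeom : Continuous (fun q : geomReal (bigChains X k) => Fgeom q) := by
  apply Continuous.subtype_mk
  apply continuous_pi
  intro v
  exact continuous_iff_continuousAt.2 fun q₀ => continuousAt_Fraw v q₀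

end St18
namespace St18
open Finset AbsSimplicialComplex Filter
open scoped Classical Topology

universe w
variable {V : Type w} {X : AbsSimplicialComplex V} {k : ℕ}

lemma continuous_bigB_fixed (S σ : Finset V) :
    Continuous (fun p : geomReal X => bigB p.1 S σ) := by
  unfold bigB
  by_cases h : (S \ σ).Nonempty
  · simp only [dif_pos h]
    exact (Continuous.finset_sup'_apply h fun v _ => continuous_eval v).max
      continuous_const
  · simp only [dif_neg h]
    exact continuous_const

lemma bigB_supp_union (p : geomReal X) (S σ : Finset V) :
    bigB p.1 (suppF p) σ = bigB p.1 (suppF p ∪ S) σ := by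
  refine bigB_congr (fun v hv hv2 => absurd (Finset.mem_union_left S hv) hv2)
    (fun v hv hv2 => hSp p v hv2)

lemma continuousAt_bigB (σ : Finset V) (p₀ : geomReal X) :
    ContinuousAt (fun p : geomReal X => bigB p.1 (suppF p) σ) p₀ := by
  set S := suppF p₀ with hSdef
  set β : geomReal X → ℝ := fun p => bigB p.1 S σ with hβ
  set t : geomReal X → ℝ := fun p => 1 - ∑ v ∈ S, p.1 v with ht
  have hβc : Continuous β := continuous_bigB_fixed S σ
  have htc : Continuous t :=
    continuous_const.sub (continuous_finset_sum _ fun v _ => continuous_eval v)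
  have hlow : ∀ p : geomReal X, β p ≤ bigB p.1 (suppF p) σ := by
    intro p
    rw [bigB_supp_union p S σ]
    exact bigB_mono Finset.subset_union_right (bigB_nonneg _ _ _)
  have hup : ∀ p : geomReal X, bigB p.1 (suppF p) σ ≤ max (β p) (t p) := by
    intro p
    rw [bigB_supp_union p S σ]
    refine bigB_le (le_trans (bigB_nonneg p.1 S σ) (le_max_left _ _)) ?_
    intro v hv hvσ
    by_cases hvS : v ∈ S
    · exact le_trans (le_bigB hvS hvσ) (le_max_left _ _)
    · exact le_trans (apply_le_one_sub_sum p hvS) (le_max_right _ _)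
  have hβ0 : β p₀ = bigB p₀.1 (suppF p₀) σ := rfl
  have ht0 : t p₀ = 0 := by
    rw [ht]; dsimp only; rw [hSdef, sum_suppF p₀]; ring
  have main : Tendsto (fun p : geomReal X => bigB p.1 (suppF p) σ) (𝓝 p₀)
      (𝓝 (bigB p₀.1 (suppF p₀) σ)) := by
    refine tendsto_of_tendsto_of_tendsto_of_le_of_le
      (g := β) (h := fun p => max (β p) (t p)) ?_ ?_ hlow hup
    · rw [← hβ0]; exact hβc.continuousAt
    · have h5 := (hβc.max htc).continuousAt (x := p₀)
      have h6 : max (β p₀) (t p₀) = bigB p₀.1 (suppF p₀) σ := by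
        rw [hβ0, ht0]
        exact max_eq_left (bigB_nonneg _ _ _)
      rw [← h6]
      exact h5
  exact main

lemma continuousAt_eV (σ : Finset V) (p₀ : geomReal X) :
    ContinuousAt (fun p : geomReal X => eV p.1 (suppF p) σ) p₀ := by
  unfold eV
  by_cases h : σ.Nonempty
  · simp only [dif_pos h]
    refine Filter.Tendsto.max ?_ tendsto_const_nhds
    exact Filter.Tendsto.sub
      ((Continuous.finset_inf'_apply h fun v _ => continuous_eval v).continuousAt)
      (continuousAt_bigB σ p₀)
  · simp only [dif_neg h]
    exact continuousAt_const

lemma continuousAt_Gnum (σ : Finset V) (p₀ : geomReal X) :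
    ContinuousAt (fun p : geomReal X => Gnum k p σ) p₀ := by
  unfold Gnum
  by_cases h : k ≤ σ.card
  · simp only [if_pos h]
    exact ContinuousAt.mul continuousAt_const (continuousAt_eV σ p₀)
  · simp only [if_neg h]
    exact continuousAt_const

lemma mG_eq_powerset (p : geomReal X) :
    mG k p = ∑ σ ∈ (suppF p).powerset, Gnum k p σ := by
  unfold mG cutsF
  exact Finset.sum_subset (Finset.filter_subset _ _) (fun σ hσ hσ2 =>
    Gnum_eq_zero_of_not_cut (by unfold cutsF; exact hσ2))

lemma mG_eq_union_powerset (p : geomReal X) (S : Finset V) :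
    mG k p = ∑ σ ∈ (suppF p ∪ S).powerset, Gnum k p σ := by
  rw [mG_eq_powerset]
  refine Finset.sum_subset (Finset.powerset_mono.2 Finset.subset_union_left) ?_
  intro σ hσ hσ2
  refine Gnum_eq_zero_of_not_cut fun hc => hσ2 ?_
  exact Finset.mem_powerset.2 (cut_subset (pt_nonneg p) (hSp p)
    ((mem_cutsF (pt_nonneg p) (hSp p)).1 hc))

lemma continuousAt_mG {d : ℕ} (hdim1 : ∀ t ∈ X.faces, t.card ≤ d + 1)
    (p₀ : geomReal X) : ContinuousAt (fun p : geomReal X => mG k p) p₀ := by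
  have hsuppcard : ∀ p : geomReal X, (suppF p).card ≤ d + 1 := fun p =>
    le_trans (Finset.card_le_card (suppF_subset_face p)) (hdim1 _ (face_spec p).1)
  set S := suppF p₀ with hSdef
  set mF : geomReal X → ℝ := fun p => ∑ σ ∈ S.powerset, Gnum k p σ with hmt
  set t : geomReal X → ℝ := fun p => 1 - ∑ v ∈ S, p.1 v with ht
  set C : ℝ := (2:ℝ)^(2*d+2) * ((d:ℝ)+1) with hC
  have hmtc : ContinuousAt mF p₀ :=
    tendsto_finset_sum _ fun σ _ => continuousAt_Gnum σ p₀
  have htc : Continuous t :=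
    continuous_const.sub (continuous_finset_sum _ fun v _ => continuous_eval v)
  have ht_nonneg : ∀ p : geomReal X, 0 ≤ t p := by
    intro p
    have := sum_le_one p S
    rw [ht]; dsimp only; linarith
  have hsplit : ∀ p : geomReal X,
      mG k p = mF p + ∑ σ ∈ (suppF p ∪ S).powerset \ S.powerset, Gnum k p σ := by
    intro p
    rw [mG_eq_union_powerset p S]
    rw [← Finset.sum_sdiff (Finset.powerset_mono.2 Finset.subset_union_right)]
    rw [hmt]
    ring
  have hterm : ∀ p : geomReal X, ∀ σ ∈ (suppF p ∪ S).powerset \ S.powerset,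
      Gnum k p σ ≤ ((d:ℝ)+1) * t p := by
    intro p σ hσ
    have hd1t : 0 ≤ ((d:ℝ)+1) * t p := by
      have := ht_nonneg p
      positivity
    by_cases hG : Gnum k p σ = 0
    · rw [hG]; exact hd1t
    · have hcut : σ ∈ cutsF p.1 (suppF p) := by
        by_contra hc
        exact hG (Gnum_eq_zero_of_not_cut hc)
      have heV : eV p.1 (suppF p) σ ≠ 0 := (mem_cutsF (pt_nonneg p) (hSp p)).1 hcut
      have hσsub : σ ⊆ suppF p := cut_subset (pt_nonneg p) (hSp p) heV
      obtain ⟨hne, hlt⟩ := eV_ne_zero_iff.1 heV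
      obtain ⟨w, hwσ, hwS⟩ := Finset.not_subset.1
        (fun hc => (Finset.mem_sdiff.1 hσ).2 (Finset.mem_powerset.2 hc))
      have heVle : eV p.1 (suppF p) σ ≤ t p := by
        rw [eV_eq_of_ne_zero heV hne]
        have h1 : σ.inf' hne p.1 ≤ p.1 w := Finset.inf'_le _ hwσ
        have h2 : p.1 w ≤ t p := apply_le_one_sub_sum p hwS
        have h3 := bigB_nonneg p.1 (suppF p) σ
        linarith
      have hcard : (σ.card : ℝ) ≤ (d:ℝ) + 1 := by
        have h1 : σ.card ≤ d + 1 := le_trans (Finset.card_le_card hσsub) (hsuppcard p)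
        exact_mod_cast h1
      unfold Gnum
      split
      · exact mul_le_mul hcard heVle (eV_nonneg _ _ _) (by positivity)
      · exact hd1t
  have hcardbound : ∀ p : geomReal X,
      (((suppF p ∪ S).powerset \ S.powerset).card : ℝ) ≤ (2:ℝ)^(2*d+2) := by
    intro p
    have h1 : ((suppF p ∪ S).powerset \ S.powerset).card ≤ (suppF p ∪ S).powerset.card :=
      Finset.card_le_card (Finset.sdiff_subset)
    have h2 : (suppF p ∪ S).powerset.card = 2 ^ (suppF p ∪ S).card :=
      Finset.card_powerset _
    have h3 : (suppF p ∪ S).card ≤ 2*d+2 := by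
      have := Finset.card_union_le (suppF p) S
      have h4 := hsuppcard p
      have h5 := hsuppcard p₀
      rw [← hSdef] at h5
      omega
    have h6 : (2:ℕ) ^ (suppF p ∪ S).card ≤ 2 ^ (2*d+2) :=
      Nat.pow_le_pow_right (by norm_num) h3
    have h7 : ((suppF p ∪ S).powerset \ S.powerset).card ≤ 2 ^ (2*d+2) := by omega
    exact_mod_cast h7
  have hlow : ∀ p : geomReal X, mF p ≤ mG k p := by
    intro p
    rw [hsplit p]
    have : 0 ≤ ∑ σ ∈ (suppF p ∪ S).powerset \ S.powerset, Gnum k p σ :=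
      Finset.sum_nonneg fun σ _ => Gnum_nonneg p σ
    linarith
  have hup : ∀ p : geomReal X, mG k p ≤ mF p + C * t p := by
    intro p
    rw [hsplit p]
    have h1 : ∑ σ ∈ (suppF p ∪ S).powerset \ S.powerset, Gnum k p σ ≤
        (((suppF p ∪ S).powerset \ S.powerset).card : ℝ) * (((d:ℝ)+1) * t p) := by
      have := Finset.sum_le_card_nsmul ((suppF p ∪ S).powerset \ S.powerset)
        (Gnum k p) (((d:ℝ)+1) * t p) (hterm p)
      rwa [nsmul_eq_mul] at this
    have h2 : (((suppF p ∪ S).powerset \ S.powerset).card : ℝ) * (((d:ℝ)+1) * t p) ≤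
        C * t p := by
      rw [hC, mul_assoc]
      refine mul_le_mul_of_nonneg_right (hcardbound p) ?_
      have := ht_nonneg p
      positivity
    linarith
  have hmt0 : mF p₀ = mG k p₀ := by
    rw [hmt]; dsimp only; rw [hSdef, ← mG_eq_powerset]
  have ht0 : t p₀ = 0 := by
    rw [ht]; dsimp only; rw [hSdef, sum_suppF p₀]; ring
  have main : Tendsto (fun p : geomReal X => mG k p) (𝓝 p₀) (𝓝 (mG k p₀)) := by
    refine tendsto_of_tendsto_of_tendsto_of_le_of_le
      (g := mF) (h := fun p => mF p + C * t p) ?_ ?_ hlow hup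
    · rw [← hmt0]; exact hmtc
    · have hCt : Continuous fun p : geomReal X => C * t p := continuous_const.mul htc
      have h5 : ContinuousAt (fun p : geomReal X => mF p + C * t p) p₀ :=
        hmtc.add hCt.continuousAt
      have h6 : mF p₀ + C * t p₀ = mG k p₀ := by rw [hmt0, ht0]; ring
      rw [← h6]
      exact h5
  exact main

end St18
namespace St18
open Finset AbsSimplicialComplex Filter
open scoped Classical Topology unitInterval

universe w
variable {V : Type w} {X : AbsSimplicialComplex V} {s : ℤ} {k : ℕ}

lemma comp_iff (hk : (k:ℤ) = s + 2) (p : geomReal X) :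
    s + 2 ≤ ((ptSupport p).ncard : ℤ) ↔ k ≤ (suppF p).card := by
  rw [ncard_ptSupport p, ← hk]
  exact_mod_cast Iff.rfl

/-- `F` as a continuous map into the skeleton complement. -/
noncomputable def FcMap (X : AbsSimplicialComplex V) (s : ℤ) (k : ℕ)
    (hk : (k:ℤ) = s + 2) : C(geomReal (bigChains X k), complementSkeleton X s) :=
  ⟨fun q => ⟨Fgeom q, (comp_iff hk _).2 (card_suppF_Fgeom q)⟩,
    continuous_Fgeom.subtype_mk _⟩

/-- `G` as a continuous map out of the skeleton complement. -/
noncomputable def GcMap (X : AbsSimplicialComplex V) (s : ℤ) (k : ℕ)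
    (hk : (k:ℤ) = s + 2) {d : ℕ} (hdim1 : ∀ t ∈ X.faces, t.card ≤ d + 1) :
    C(complementSkeleton X s, geomReal (bigChains X k)) :=
  ⟨fun p => Ggeom p.1 ((comp_iff hk p.1).1 p.2), by
    have hcont : Continuous fun p : complementSkeleton X s =>
        (fun τf => Gnum k p.1 τf / mG k p.1 : Finset V → ℝ) := by
      apply continuous_pi
      intro τf
      rw [continuous_iff_continuousAt]
      intro p₀
      have hp₀ : k ≤ (suppF p₀.1).card := (comp_iff hk p₀.1).1 p₀.2
      exact ((continuousAt_Gnum τf p₀.1).div (continuousAt_mG hdim1 p₀.1)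
        (ne_of_gt (mG_pos p₀.1 hp₀))).comp continuous_subtype_val.continuousAt
    exact hcont.subtype_mk _⟩

/-- convex combination `(1-a) r + a p` inside `|X|`, when `supp r ⊆ supp p`. -/
noncomputable def cvx (p r : geomReal X)
    (hsupp : ∀ v, r.1 v ≠ 0 → p.1 v ≠ 0) (a : I) : geomReal X := by
  refine ⟨fun v => (1 - (a:ℝ)) * r.1 v + (a:ℝ) * p.1 v,
    p.2.choose, (face_spec p).1, ?_, ?_, ?_⟩
  · intro v hv
    have hpv : p.1 v = 0 := (face_spec p).2.1 v hv
    have hrv : r.1 v = 0 := by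
      by_contra h
      exact hv (by
        by_contra hvf
        exact hsupp v h ((face_spec p).2.1 v hvf))
    show (1 - (a:ℝ)) * r.1 v + (a:ℝ) * p.1 v = 0
    rw [hpv, hrv]
    ring
  · intro v
    have h1 := pt_nonneg p v
    have h2 := pt_nonneg r v
    have h3 : 0 ≤ (a:ℝ) := a.2.1
    have h4 : (a:ℝ) ≤ 1 := a.2.2
    show 0 ≤ (1 - (a:ℝ)) * r.1 v + (a:ℝ) * p.1 v
    nlinarith
  · have hrsum : ∑ v ∈ p.2.choose, r.1 v = 1 := by
      refine sum_eq_one_of_suppF_subset r fun v hv => ?_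
      by_contra hvf
      exact (mem_suppF.1 hv) (by
        by_contra h
        exact (hsupp v h) ((face_spec p).2.1 v hvf))
    dsimp only
    rw [Finset.sum_add_distrib, ← Finset.mul_sum, ← Finset.mul_sum, hrsum,
      (face_spec p).2.2.2]
    ring

lemma cvx_supp_card {p r : geomReal X} {hsupp : ∀ v, r.1 v ≠ 0 → p.1 v ≠ 0}
    {a : I} (hp : k ≤ (suppF p).card) (hr : k ≤ (suppF r).card) :
    k ≤ (suppF (cvx p r hsupp a)).card := by
  by_cases ha : (a:ℝ) = 0
  · refine le_trans hr (Finset.card_le_card fun v hv => ?_)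
    rw [mem_suppF] at hv ⊢
    show (1 - (a:ℝ)) * r.1 v + (a:ℝ) * p.1 v ≠ 0
    rw [ha]
    intro hc
    apply hv
    linarith
  · refine le_trans hp (Finset.card_le_card fun v hv => ?_)
    rw [mem_suppF] at hv ⊢
    show (1 - (a:ℝ)) * r.1 v + (a:ℝ) * p.1 v ≠ 0
    have h1 := pt_nonneg p v
    have h2 := pt_nonneg r v
    have h3 : 0 < (a:ℝ) := lt_of_le_of_ne a.2.1 (Ne.symm ha)
    have h4 : (a:ℝ) ≤ 1 := a.2.2
    have h5 : 0 < p.1 v := lt_of_le_of_ne h1 (Ne.symm hv)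
    nlinarith

lemma Ggeom_supp' (hk : (k:ℤ) = s + 2) {d : ℕ}
    (hdim1 : ∀ t ∈ X.faces, t.card ≤ d + 1) (p : complementSkeleton X s) :
    ∀ v, (((FcMap X s k hk).comp (GcMap X s k hk hdim1)) p).1.1 v ≠ 0 → p.1.1 v ≠ 0 :=
  fun v h => Ggeom_supp (p := p.1) (hp := (comp_iff hk p.1).1 p.2) h

/-- The straight-line homotopy between `F ∘ G` and the identity. -/
noncomputable def Hhtpy (X : AbsSimplicialComplex V) (s : ℤ) (k : ℕ)
    (hk : (k:ℤ) = s + 2) {d : ℕ} (hdim1 : ∀ t ∈ X.faces, t.card ≤ d + 1) :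
    ContinuousMap.Homotopy ((FcMap X s k hk).comp (GcMap X s k hk hdim1))
      (ContinuousMap.id (complementSkeleton X s)) := by
  set FG := (FcMap X s k hk).comp (GcMap X s k hk hdim1) with hFG
  refine ⟨⟨fun z => ⟨cvx z.2.1 (FG z.2).1 (Ggeom_supp' hk hdim1 z.2) z.1,
      (comp_iff hk _).2 (cvx_supp_card ((comp_iff hk _).1 z.2.2)
        ((comp_iff hk _).1 (FG z.2).2))⟩, ?_⟩, ?_, ?_⟩
  · -- continuity
    apply Continuous.subtype_mk
    apply Continuous.subtype_mk
    apply continuous_pi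
    intro v
    have h1 : Continuous fun z : I × complementSkeleton X s => (z.1 : ℝ) :=
      continuous_subtype_val.comp continuous_fst
    have h2 : Continuous fun z : I × complementSkeleton X s => z.2.1.1 v :=
      ((continuous_apply v).comp (continuous_subtype_val.comp
        continuous_subtype_val)).comp continuous_snd
    have h3 : Continuous fun z : I × complementSkeleton X s => (FG z.2).1.1 v :=
      ((continuous_apply v).comp (continuous_subtype_val.comp
        continuous_subtype_val)).comp (FG.continuous.comp continuous_snd)
    exact ((continuous_const.sub h1).mul h3).add (h1.mul h2)
  · -- at time 0 it is F ∘ G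
    intro p
    apply Subtype.ext
    apply Subtype.ext
    funext v
    show (1 - ((0:I):ℝ)) * (FG p).1.1 v + ((0:I):ℝ) * p.1.1 v = (FG p).1.1 v
    norm_num
  · -- at time 1 it is the identity
    intro p
    apply Subtype.ext
    apply Subtype.ext
    funext v
    show (1 - ((1:I):ℝ)) * (FG p).1.1 v + ((1:I):ℝ) * p.1.1 v = p.1.1 v
    norm_num

end St18
namespace St18
open Finset AbsSimplicialComplex
open scoped Classical

universe w
variable {V : Type w} {X : AbsSimplicialComplex V} {s : ℤ} {k : ℕ}

lemma bigChains_dim {d : ℕ} (hdim1 : ∀ t ∈ X.faces, t.card ≤ d + 1)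
    (hk : (k:ℤ) = s + 2) :
    ∀ c ∈ (bigChains X k).faces, (c.card : ℤ) ≤ (d:ℤ) - s := by
  rintro c ⟨hcne, hmem, hchain⟩
  have hinj : Set.InjOn Finset.card (↑c : Set (Finset V)) := by
    intro σ hσ τ hτ heq
    rcases hchain σ hσ τ hτ with h | h
    · exact Finset.eq_of_subset_of_card_le h (le_of_eq heq.symm)
    · exact (Finset.eq_of_subset_of_card_le h (le_of_eq heq)).symm
  have h1 : c.card = (c.image Finset.card).card :=
    (Finset.card_image_of_injOn hinj).symm
  have h2 : c.image Finset.card ⊆ Finset.Icc k (d+1) := by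
    intro n hn
    obtain ⟨σ, hσ, rfl⟩ := Finset.mem_image.1 hn
    exact Finset.mem_Icc.2 ⟨(hmem σ hσ).2, hdim1 σ (hmem σ hσ).1⟩
  have h3 : (Finset.Icc k (d+1)).card = d + 2 - k := by
    rw [Nat.card_Icc]
  have h4 : c.card ≤ d + 2 - k := by
    rw [h1]
    calc (c.image Finset.card).card ≤ (Finset.Icc k (d+1)).card :=
          Finset.card_le_card h2
      _ = d + 2 - k := h3
  have h5 : 1 ≤ c.card := Finset.card_pos.2 hcne
  omega

end St18

/-- the complement of the `s`-skeleton of a `d`-dimensional complex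
is homotopy equivalent to a simplicial complex of dimension at most `d - s - 1`. -/
theorem statement18 {V : Type u} (X : AbsSimplicialComplex V) (d : ℕ)
    (hdim : X.Dim d) (s : ℤ) (hs : -1 ≤ s) :
    ∃ (W : Type u) (Y : AbsSimplicialComplex W),
      (∀ t ∈ Y.faces, (t.card : ℤ) ≤ (d : ℤ) - s) ∧
      Nonempty (complementSkeleton X s ≃ₕ AbsSimplicialComplex.geomReal Y) := by
  classical
  set k := (s+2).toNat with hkdef
  have hk : (k:ℤ) = s + 2 := Int.toNat_of_nonneg (by linarith)
  have hk1 : 1 ≤ k := by omega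
  refine ⟨Finset V, St18.bigChains X k, St18.bigChains_dim hdim.1 hk, ?_⟩
  refine ⟨⟨St18.GcMap X s k hk hdim.1, St18.FcMap X s k hk, ?_, ?_⟩⟩
  · exact ⟨St18.Hhtpy X s k hk hdim.1⟩
  · have hcomp : (St18.GcMap X s k hk hdim.1).comp (St18.FcMap X s k hk) =
        ContinuousMap.id _ := by
      apply ContinuousMap.ext
      intro q
      exact St18.GF_id hk1 q
    rw [hcomp]
end
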